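/- arXiv:math/0703519 — 9 statements merged into one kernel-verified Lean document; each statement's English description precedes it below -/
import Mathlib

section
/- For every integer n ≥ 1, the integer D_n = (14·67^n + 8)^2 + 88·67^n is divisible by 4, and E_n = D_n/4 satisfies (7·67^n + 5)^2 < E_n < (7·67^n + 6)^2; consequently E_n is not a perfect square and ⌊√E_n⌋ = 7·67^n + 5. -/
/-- Easy kreeper family: `D_n = (14·67^n + 8)^2 + 88·67^n` is divisible by 4,
`E_n = D_n/4` lies strictly between consecutive squares, hence is not a perfect
square and `⌊√E_n⌋ = 7·67^n + 5`. -/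
theorem stmt_0 (n : ℕ) (hn : 1 ≤ n)
    (D E : ℤ) (hD : D = (14 * 67 ^ n + 8) ^ 2 + 88 * 67 ^ n) (hE : E = D / 4) :
    4 ∣ D ∧
    (7 * 67 ^ n + 5) ^ 2 < E ∧ E < (7 * 67 ^ n + 6) ^ 2 ∧
    ¬ IsSquare E ∧
    ⌊Real.sqrt (E : ℝ)⌋ = 7 * 67 ^ n + 5 := by
  set x : ℤ := 67 ^ n with hx
  have hx67 : (67 : ℤ) ≤ x := by
    calc (67:ℤ) = 67 ^ 1 := (pow_one _).symm
    _ ≤ 67 ^ n := pow_le_pow_right₀ (by norm_num) hn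
  have hDeq : D = 4 * (49 * x ^ 2 + 78 * x + 16) := by rw [hD]; ring
  have hdvd : (4 : ℤ) ∣ D := ⟨_, hDeq⟩
  have hEeq : E = 49 * x ^ 2 + 78 * x + 16 := by
    rw [hE, hDeq, Int.mul_ediv_cancel_left _ (by norm_num)]
  have h1 : (7 * x + 5) ^ 2 < E := by rw [hEeq]; nlinarith
  have h2 : E < (7 * x + 6) ^ 2 := by rw [hEeq]; nlinarith
  have ha : (0 : ℤ) ≤ 7 * x + 5 := by linarith
  refine ⟨hdvd, h1, h2, ?_, ?_⟩
  · rintro ⟨r, hr⟩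
    have hr' : E = |r| ^ 2 := by rw [hr, sq_abs, sq]
    have hr0 : 0 ≤ |r| := abs_nonneg r
    have hlt : 7 * x + 5 < |r| := by nlinarith [hr' ▸ h1]
    have hlt2 : |r| < 7 * x + 6 := by nlinarith [hr' ▸ h2]
    omega
  · rw [Int.floor_eq_iff]
    constructor
    · have : ((7 * x + 5 : ℤ) : ℝ) ^ 2 ≤ (E : ℝ) := by
        have := h1.le
        exact_mod_cast by exact_mod_cast this
      calc ((7 * x + 5 : ℤ) : ℝ) = Real.sqrt (((7 * x + 5 : ℤ) : ℝ) ^ 2) := by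
            rw [Real.sqrt_sq (by exact_mod_cast ha)]
        _ ≤ Real.sqrt (E : ℝ) := Real.sqrt_le_sqrt this
    · have hlt : (E : ℝ) < ((7 * x + 6 : ℤ) : ℝ) ^ 2 := by exact_mod_cast h2
      have := Real.sqrt_lt_sqrt (by exact_mod_cast (by nlinarith : (0:ℤ) ≤ E)) hlt
      have hx67' : (67:ℝ) ≤ (x:ℝ) := by exact_mod_cast hx67
      rw [Real.sqrt_sq (by push_cast; linarith)] at this
      push_cast at this ⊢
      linarith
end

section
/- For every integer n ≥ 9, the integer D_n = (2^n − 31)^2 + 44·2^n satisfies (2^n − 9)^2 < D_n < (2^n − 8)^2; consequently D_n is not a perfect square and ⌊√D_n⌋ = 2^n − 9. Moreover D_n ≡ 1 (mod 4) for every n ≥ 2. -/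
/-- Kreeper family with non-unit `l` and `m`: for `n ≥ 9`,
`D_n = (2^n − 31)^2 + 44·2^n` lies strictly between consecutive squares,
hence is not a perfect square and `⌊√D_n⌋ = 2^n − 9`; moreover `D_n ≡ 1 (mod 4)`
for all `n ≥ 2`. -/
theorem stmt_3 :
    (∀ n : ℕ, 9 ≤ n → ∀ D : ℤ, D = ((2:ℤ) ^ n - 31) ^ 2 + 44 * 2 ^ n →
      ((2:ℤ) ^ n - 9) ^ 2 < D ∧ D < ((2:ℤ) ^ n - 8) ^ 2 ∧
      ¬ IsSquare D ∧
      ⌊Real.sqrt (D : ℝ)⌋ = 2 ^ n - 9) ∧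
    (∀ n : ℕ, 2 ≤ n → (((2:ℤ) ^ n - 31) ^ 2 + 44 * 2 ^ n) % 4 = 1) := by
  constructor
  · intro n hn D hD
    have hpow : (512 : ℤ) ≤ 2 ^ n := by
      calc (512 : ℤ) = 2 ^ 9 := by norm_num
        _ ≤ 2 ^ n := pow_le_pow_right₀ (by norm_num) hn
    have h1 : ((2:ℤ) ^ n - 9) ^ 2 < D := by nlinarith
    have h2 : D < ((2:ℤ) ^ n - 8) ^ 2 := by nlinarith
    have ha : (0 : ℤ) ≤ 2 ^ n - 9 := by linarith
    refine ⟨h1, h2, ?_, ?_⟩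
    · rintro ⟨r, hr⟩
      have hr' : D = |r| ^ 2 := by rw [hr]; rw [sq_abs]; ring
      have h1' : (2:ℤ) ^ n - 9 < |r| := by nlinarith [abs_nonneg r]
      have h2' : |r| < (2:ℤ) ^ n - 8 := by nlinarith [abs_nonneg r]
      omega
    · have hDpos : (0:ℤ) < D := by nlinarith
      have key1 : ((2:ℤ) ^ n - 9 : ℤ) ≤ Real.sqrt (D : ℝ) := by
        rw [show ((((2:ℤ) ^ n - 9 : ℤ) : ℝ)) = Real.sqrt ((((2:ℤ) ^ n - 9 : ℤ) : ℝ)^2) from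
          (Real.sqrt_sq (by exact_mod_cast ha)).symm]
        apply Real.sqrt_le_sqrt
        have : (((2:ℤ) ^ n - 9) ^ 2 : ℤ) ≤ D := le_of_lt h1
        exact_mod_cast this
      have key2 : Real.sqrt (D : ℝ) < (((2:ℤ) ^ n - 8 : ℤ) : ℝ) := by
        rw [show ((((2:ℤ) ^ n - 8 : ℤ) : ℝ)) = Real.sqrt ((((2:ℤ) ^ n - 8 : ℤ) : ℝ)^2) from
          (Real.sqrt_sq (by exact_mod_cast (by linarith : (0:ℤ) ≤ 2^n - 8))).symm]
        apply Real.sqrt_lt_sqrt (by positivity)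
        exact_mod_cast h2
      rw [Int.floor_eq_iff]
      constructor
      · exact_mod_cast key1
      · have : ((2:ℤ)^n - 9 : ℤ) + 1 = ((2:ℤ)^n - 8 : ℤ) := by ring
        push_cast
        push_cast at key2
        linarith
  · intro n hn
    obtain ⟨k, rfl⟩ : ∃ k, n = 2 + k := ⟨n - 2, by omega⟩
    have h : (2:ℤ) ^ (2 + k) = 4 * 2 ^ k := by rw [pow_add]; ring
    rw [h]
    have : ((4 * (2:ℤ) ^ k - 31) ^ 2 + 44 * (4 * 2 ^ k)) =
        4 * (4 * (2^k)^2 - 62 * 2^k + 240 + 44 * 2^k) + 1 := by ring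
    rw [this]
    omega
end

section
/- For every integer n ≥ 2, the integer D_n = (1018·1319011^n + 65290957)^2 + 356300·1319011^n satisfies (1018·1319011^n + 65291131)^2 < D_n < (1018·1319011^n + 65291132)^2; consequently D_n is not a perfect square and ⌊√D_n⌋ = 1018·1319011^n + 65291131. Moreover D_n ≡ 1 (mod 4). -/
/-- Kreeper family with square factors:
`D_n = (1018·1319011^n + 65290957)^2 + 356300·1319011^n` lies strictly between
consecutive squares, hence is not a perfect square,
`⌊√D_n⌋ = 1018·1319011^n + 65291131`, and `D_n ≡ 1 (mod 4)`. -/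
theorem stmt_5 (n : ℕ) (hn : 2 ≤ n)
    (D : ℤ) (hD : D = (1018 * 1319011 ^ n + 65290957) ^ 2 + 356300 * 1319011 ^ n) :
    (1018 * 1319011 ^ n + 65291131) ^ 2 < D ∧
    D < (1018 * 1319011 ^ n + 65291132) ^ 2 ∧
    ¬ IsSquare D ∧
    ⌊Real.sqrt (D : ℝ)⌋ = 1018 * 1319011 ^ n + 65291131 ∧
    D % 4 = 1 := by
  set x : ℤ := 1319011 ^ n with hx
  have hxge : (1319011 : ℤ) ^ 2 ≤ x := pow_le_pow_right₀ (by norm_num) hn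
  have hx2 : (1739790018121 : ℤ) ≤ x := by nlinarith
  have hx0 : (0 : ℤ) ≤ x := by linarith
  set m : ℤ := 1018 * x + 65291131 with hm
  have hm0 : (0 : ℤ) ≤ m := by simp only [hm]; linarith
  have h1 : m ^ 2 < D := by rw [hD, hm]; nlinarith
  have h2 : D < (m + 1) ^ 2 := by rw [hD, hm]; nlinarith
  have h2' : D < (1018 * x + 65291132) ^ 2 := by
    have he : (m + 1) ^ 2 = (1018 * x + 65291132) ^ 2 := by rw [hm]; ring
    linarith [he ▸ h2]
  refine ⟨h1, h2', ?_, ?_, ?_⟩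
  · rintro ⟨k, hk⟩
    have habs : |k| * |k| = D := by rw [abs_mul_abs_self, ← hk]
    have h4 : m < |k| := by
      by_contra h
      push_neg at h
      have := mul_le_mul h h (abs_nonneg k) hm0
      nlinarith
    have h5 : m + 1 ≤ |k| := h4
    have := mul_le_mul h5 h5 (by linarith) (abs_nonneg k)
    nlinarith
  · have hD0 : (0 : ℝ) ≤ (D : ℝ) := by
      have h : (0:ℤ) ≤ D := by nlinarith
      exact_mod_cast h
    have hlow : (m : ℝ) ≤ Real.sqrt (D : ℝ) := by
      rw [Real.le_sqrt (by exact_mod_cast hm0) hD0]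
      exact_mod_cast h1.le
    have hhigh : Real.sqrt (D : ℝ) < (m : ℝ) + 1 := by
      rw [show ((m:ℝ)+1) = ((m+1 : ℤ) : ℝ) by push_cast; ring,
        Real.sqrt_lt' (by exact_mod_cast lt_of_le_of_lt hm0 (lt_add_one m))]
      exact_mod_cast h2
    have hfl : ⌊Real.sqrt (D : ℝ)⌋ = m :=
      Int.floor_eq_iff.mpr ⟨hlow, hhigh⟩
    simpa [hm] using hfl
  · have hdecomp : D = 4 * (259081 * x ^ 2 + 33233186188 * x + 1065727266493962) + 1 := by
      rw [hD]; ring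
    omega
end

section
/- For every integer n ≥ 1, let a_n = (3^{2n+2} + 3^{n+2} + 3^n − 1)/2 and E_n = a_n^2 + 3^n. Then the first partial quotient after a_n in the simple continued fraction expansion of √E_n equals 3^{n+2} + 9; equivalently, ⌊1/(√E_n − a_n)⌋ = 3^{n+2} + 9. -/
set_option maxHeartbeats 1000000 in
/-- Higher creeper family: with `a_n = (3^{2n+2} + 3^{n+2} + 3^n − 1)/2` and
`E_n = a_n^2 + 3^n`, the first partial quotient after `a_n` in the simple
continued fraction expansion of `√E_n` is `3^{n+2} + 9`, i.e.
`⌊1/(√E_n − a_n)⌋ = 3^{n+2} + 9`. -/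
theorem stmt_8 (n : ℕ) (hn : 1 ≤ n)
    (a E : ℤ)
    (ha : 2 * a = (3:ℤ) ^ (2 * n + 2) + 3 ^ (n + 2) + 3 ^ n - 1)
    (hE : E = a ^ 2 + 3 ^ n) :
    ⌊1 / (Real.sqrt (E : ℝ) - (a : ℝ))⌋ = 3 ^ (n + 2) + 9 := by
  set s : ℝ := Real.sqrt (E : ℝ) with hsdef
  set B : ℝ := (3:ℝ) ^ n with hBdef
  have hB3 : (3:ℝ) ≤ B := by
    rw [hBdef]
    calc (3:ℝ) = 3 ^ 1 := (pow_one 3).symm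
    _ ≤ 3 ^ n := pow_le_pow_right₀ (by norm_num) hn
  have hB0 : (0:ℝ) < B := by linarith
  have p1 : (3:ℝ) ^ (2 * n + 2) = 9 * B ^ 2 := by
    rw [hBdef, pow_add, two_mul, pow_add]; ring
  have p2 : (3:ℝ) ^ (n + 2) = 9 * B := by
    rw [hBdef, pow_add]; ring
  have h2a : 2 * (a:ℝ) = 9 * B ^ 2 + 10 * B - 1 := by
    have h := congrArg (Int.cast : ℤ → ℝ) ha
    push_cast at h
    rw [p1, p2] at h
    linarith [h, hBdef.symm]
  have haval : (a:ℝ) = (9 * B ^ 2 + 10 * B - 1) / 2 := by linarith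
  have hEr : (E:ℝ) = (a:ℝ) ^ 2 + B := by
    have h := congrArg (Int.cast : ℤ → ℝ) hE
    push_cast at h
    rw [h, hBdef]
  have hE0 : (0:ℝ) ≤ (E:ℝ) := by nlinarith [sq_nonneg ((a:ℝ))]
  have hs0 : 0 ≤ s := Real.sqrt_nonneg _
  have hs2 : s ^ 2 = (a:ℝ) ^ 2 + B := by
    rw [hsdef, Real.sq_sqrt hE0, hEr]
  have hs2' : s ^ 2 = ((9 * B ^ 2 + 10 * B - 1) / 2) ^ 2 + B := by
    rw [hs2, haval]
  have ha0 : 0 < (a:ℝ) := by nlinarith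
  have hsa : (a:ℝ) < s := by
    by_contra hc
    push_neg at hc
    nlinarith
  have hL : ((9 * B ^ 2 + 8 * B + 1) / 2 : ℝ) ≤ s := by
    have h1 : ((9 * B ^ 2 + 8 * B + 1) / 2) ^ 2 ≤ s ^ 2 := by
      rw [hs2']; nlinarith [hB3, sq_nonneg B]
    by_contra hc
    push_neg at hc
    have h2 := mul_self_lt_mul_self hs0 hc
    nlinarith [h1, h2]
  have hU : s < ((9 * B ^ 2 + 10 * B + 1) / 2 : ℝ) := by
    have h1 : s ^ 2 < ((9 * B ^ 2 + 10 * B + 1) / 2) ^ 2 := by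
      rw [hs2']; nlinarith [hB3]
    have hU0 : (0:ℝ) < (9 * B ^ 2 + 10 * B + 1) / 2 := by nlinarith
    by_contra hc
    push_neg at hc
    have h2 := mul_self_le_mul_self (le_of_lt hU0) hc
    nlinarith [h1, h2]
  have hinv : 1 / (s - (a:ℝ)) = (s + a) / B := by
    have hne : s - (a:ℝ) ≠ 0 := ne_of_gt (by linarith)
    have hBne : B ≠ 0 := ne_of_gt hB0
    rw [div_eq_div_iff (by assumption) hBne]
    linear_combination -hs2
  rw [hinv, Int.floor_eq_iff]
  push_cast
  rw [p2]
  constructor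
  · rw [le_div_iff₀ hB0]
    nlinarith [hL, haval]
  · rw [div_lt_iff₀ hB0]
    nlinarith [hU, haval]
end

section
/- For every integer n ≥ 1, the integer D_n = (3^{2n+3} − 31·3^n + 10)^2 + 40·3^n is divisible by 4; writing b_n = (3^{2n+3} − 31·3^n + 10)/2 (an integer), E_n = D_n/4 = b_n^2 + 10·3^n satisfies b_n^2 < E_n < (b_n + 1)^2, so E_n is not a perfect square and ⌊√E_n⌋ = b_n. -/
/-- Higher creeper family: `D_n = (3^{2n+3} − 31·3^n + 10)^2 + 40·3^n` is
divisible by 4, `b_n = (3^{2n+3} − 31·3^n + 10)/2` is an integer,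
`E_n = D_n/4 = b_n^2 + 10·3^n` lies strictly between consecutive squares, hence
is not a perfect square and `⌊√E_n⌋ = b_n`. -/
theorem stmt_9 (n : ℕ) (hn : 1 ≤ n)
    (D b E : ℤ)
    (hD : D = ((3:ℤ) ^ (2 * n + 3) - 31 * 3 ^ n + 10) ^ 2 + 40 * 3 ^ n)
    (hb : b = ((3:ℤ) ^ (2 * n + 3) - 31 * 3 ^ n + 10) / 2)
    (hE : E = D / 4) :
    4 ∣ D ∧
    (2 : ℤ) ∣ ((3:ℤ) ^ (2 * n + 3) - 31 * 3 ^ n + 10) ∧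
    E = b ^ 2 + 10 * 3 ^ n ∧
    b ^ 2 < E ∧ E < (b + 1) ^ 2 ∧
    ¬ IsSquare E ∧
    ⌊Real.sqrt (E : ℝ)⌋ = b := by
  set t : ℤ := 3 ^ n with ht
  have ht3 : (3:ℤ) ≤ t := by
    calc (3:ℤ) = 3 ^ 1 := by norm_num
    _ ≤ 3 ^ n := pow_le_pow_right₀ (by norm_num) hn
  have hpow : (3:ℤ) ^ (2 * n + 3) = 27 * t ^ 2 := by
    rw [show 2*n+3 = n+n+3 by ring, pow_add, pow_add, ht]; ring
  have ha : (3:ℤ) ^ (2 * n + 3) - 31 * 3 ^ n + 10 = t * (27 * t - 31) + 10 := by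
    rw [hpow]; ring
  have hoddt : Odd t := Odd.pow ⟨1, by norm_num⟩
  have heven : (2:ℤ) ∣ ((3:ℤ) ^ (2 * n + 3) - 31 * 3 ^ n + 10) := by
    rw [ha]
    have h1 : Even (27 * t - 31) :=
      Odd.sub_odd (Odd.mul ⟨13, by norm_num⟩ hoddt) ⟨15, by norm_num⟩
    obtain ⟨k, hk⟩ := h1
    exact ⟨t * k + 5, by rw [hk]; ring⟩
  have hab : 2 * b = (3:ℤ) ^ (2 * n + 3) - 31 * 3 ^ n + 10 := by
    rw [hb]; exact Int.mul_ediv_cancel' heven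
  have hD4 : D = 4 * (b ^ 2 + 10 * t) := by
    rw [hD, ← hab]; ring
  have hdvd4 : (4:ℤ) ∣ D := ⟨b ^ 2 + 10 * t, hD4⟩
  have hE' : E = b ^ 2 + 10 * t := by
    rw [hE, hD4]; exact Int.mul_ediv_cancel_left _ (by norm_num)
  have hbig : 10 * t < 2 * b := by
    rw [hab, ha]; nlinarith
  have hbpos : 0 < b := by nlinarith
  have h1 : b ^ 2 < E := by rw [hE']; nlinarith
  have h2 : E < (b + 1) ^ 2 := by rw [hE']; nlinarith
  refine ⟨hdvd4, heven, hE', h1, h2, ?_, ?_⟩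
  · rintro ⟨r, hr⟩
    have hr2 : E = |r| ^ 2 := by rw [hr, sq_abs]; ring
    have hlt : b < |r| :=
      lt_of_pow_lt_pow_left₀ 2 (abs_nonneg r) (by rw [← hr2]; exact h1)
    have hlt2 : |r| < b + 1 :=
      lt_of_pow_lt_pow_left₀ 2 (by positivity) (by rw [← hr2]; exact h2)
    omega
  · rw [Int.floor_eq_iff]
    constructor
    · rw [show ((b:ℝ)) = |(b:ℝ)| from (abs_of_pos (by exact_mod_cast hbpos)).symm,
        ← Real.sqrt_sq_eq_abs]
      apply Real.sqrt_le_sqrt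
      have : (b:ℝ) ^ 2 ≤ (E:ℝ) := by exact_mod_cast h1.le
      linarith
    · have hx : (0:ℝ) < (b:ℝ) + 1 := by positivity
      rw [show ((b:ℝ) + 1) = ((b + 1 : ℤ) : ℝ) by push_cast; ring] at hx ⊢
      rw [Real.sqrt_lt' hx]
      exact_mod_cast h2
end

section
/- The polynomial D(X) = X^{18} + 2X^{12} + 2X^{11} + 2X^9 + X^6 + 2X^5 + 5X^4 + 6X^3 + 6X^2 + 4X + 1 in ℚ[X] satisfies D(X) = (X^9 + X^3 + X^2 + 1)^2 + 4X(X^3 + X^2 + X + 1), and D(X) is not the square of any polynomial in ℚ[X]. -/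
open Polynomial

lemma no_rat_sq_32 (q : ℚ) : q ^ 2 ≠ 32 := by
  intro h
  have h2 : ((q / 4 : ℚ) : ℝ) ^ 2 = 2 := by
    push_cast
    have : (q : ℝ) ^ 2 = 32 := by exact_mod_cast congrArg (fun x : ℚ => (x : ℝ)) h
    nlinarith
  have hir : Irrational (Real.sqrt 2) := irrational_sqrt_two
  have : Real.sqrt 2 = |((q / 4 : ℚ) : ℝ)| := by
    rw [← Real.sqrt_sq_eq_abs, h2]
  rw [this] at hir
  exact hir ⟨|q / 4|, by push_cast; rfl⟩

/-- The function-field kreeper polynomial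
`D(X) = X^18 + 2X^12 + 2X^11 + 2X^9 + X^6 + 2X^5 + 5X^4 + 6X^3 + 6X^2 + 4X + 1`
satisfies `D(X) = (X^9 + X^3 + X^2 + 1)^2 + 4X(X^3 + X^2 + X + 1)` and is not
the square of a polynomial over `ℚ`. -/
theorem stmt_13 (D : ℚ[X])
    (hD : D = X ^ 18 + 2 * X ^ 12 + 2 * X ^ 11 + 2 * X ^ 9 + X ^ 6 + 2 * X ^ 5 +
      5 * X ^ 4 + 6 * X ^ 3 + 6 * X ^ 2 + 4 * X + 1) :
    D = (X ^ 9 + X ^ 3 + X ^ 2 + 1) ^ 2 + 4 * X * (X ^ 3 + X ^ 2 + X + 1) ∧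
    ¬ ∃ p : ℚ[X], D = p ^ 2 := by
  subst hD
  constructor
  · ring
  · rintro ⟨p, hp⟩
    have h1 := congrArg (fun f => Polynomial.eval 1 f) hp
    simp [Polynomial.eval_pow] at h1
    exact no_rat_sq_32 (p.eval 1) (by rw [← h1]; norm_num)
end

section
/- Let E = (7·67^6 + 4)^2 + 22·67^6. Then E is not a perfect square, ⌊√E⌋ = 633208675188, and the sequence (a_k)_{k≥1} of partial quotients of the simple continued fraction expansion of √E is periodic with minimal period 46, i.e. a_{k+46} = a_k for all k ≥ 1 and no smaller positive integer has this property. -/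
set_option maxHeartbeats 1000000


/-- The complete quotients of the simple continued fraction algorithm:
`x_0 = x` and `x_{k+1} = 1/(x_k − ⌊x_k⌋)`. -/
noncomputable def completeQuotient (x : ℝ) : ℕ → ℝ
  | 0 => x
  | k + 1 => 1 / (completeQuotient x k - (⌊completeQuotient x k⌋ : ℝ))

lemma cq_succ (x : ℝ) (k : ℕ) :
    completeQuotient x (k + 1) =
      1 / (completeQuotient x k - (⌊completeQuotient x k⌋ : ℝ)) := rfl

lemma cfStep (s : ℝ) (E n : ℤ) (hs : s ^ 2 = (E : ℝ)) (hn : (n : ℝ) ≤ s)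
    (hn' : s < (n : ℝ) + 1) (k : ℕ) (p q a p' q' : ℤ)
    (hk : completeQuotient s k = (s + (p : ℝ)) / (q : ℝ))
    (hq : 0 < q) (hq' : 0 < q') (hp' : p' = a * q - p)
    (hqq' : q * q' = E - p' ^ 2) (hal : a * q ≤ p + n) (har : p + n < (a + 1) * q) :
    ⌊completeQuotient s k⌋ = a ∧
      completeQuotient s (k + 1) = (s + (p' : ℝ)) / (q' : ℝ) := by
  have hq0 : (0:ℝ) < (q:ℝ) := by exact_mod_cast hq
  have hq'0 : (0:ℝ) < (q':ℝ) := by exact_mod_cast hq'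
  have hal' : ((a:ℝ)) * q ≤ (p:ℝ) + n := by exact_mod_cast hal
  have har' : (p:ℝ) + n + 1 ≤ ((a:ℝ) + 1) * q := by
    exact_mod_cast Int.lt_iff_add_one_le.mp har
  have hfl : ⌊completeQuotient s k⌋ = a := by
    rw [hk, Int.floor_eq_iff]
    constructor
    · rw [le_div_iff₀ hq0]; linarith
    · rw [div_lt_iff₀ hq0]; push_cast; linarith
  refine ⟨hfl, ?_⟩
  have key : (q:ℝ) * q' = s ^ 2 - (p':ℝ) ^ 2 := by rw [hs]; exact_mod_cast hqq'
  have hpc : (p':ℝ) = (a:ℝ) * q - p := by exact_mod_cast hp'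
  have hne : s - (p':ℝ) ≠ 0 := by
    intro h
    have h2 : s ^ 2 - (p':ℝ) ^ 2 = 0 := by
      have : s = (p':ℝ) := by linarith
      rw [this]; ring
    nlinarith [mul_pos hq0 hq'0]
  rw [cq_succ, hfl, hk]
  have hd : (s + (p:ℝ)) / q - (a:ℝ) = (s - (p':ℝ)) / q := by
    field_simp
    linarith [hpc]
  rw [hd, one_div_div, div_eq_div_iff hne (ne_of_gt hq'0)]
  linear_combination key

lemma perMul (a : ℕ → ℤ) (p : ℕ) (h : ∀ k, 1 ≤ k → a (k + p) = a k) :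
    ∀ u k, 1 ≤ k → a (k + u * p) = a k := by
  intro u
  induction u with
  | zero => simp
  | succ u ih =>
    intro k hk
    have e : k + (u + 1) * p = (k + u * p) + p := by ring
    rw [e, h _ (by omega), ih k hk]

lemma perGcd (a : ℕ → ℤ) (p q : ℕ) (hp : 0 < p) (hq : 0 < q)
    (h1 : ∀ k, 1 ≤ k → a (k + p) = a k) (h2 : ∀ k, 1 ≤ k → a (k + q) = a k) :
    ∀ k, 1 ≤ k → a (k + Nat.gcd p q) = a k := by
  obtain ⟨u, v, huv⟩ : ∃ u v : ℕ, u * p = Nat.gcd p q + v * q := by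
    have hb := Nat.gcd_eq_gcd_ab p q
    set A := Nat.gcdA p q with hA
    set B := Nat.gcdB p q with hB
    set T : ℤ := ((A.natAbs + B.natAbs + 1 : ℕ) : ℤ) with hT
    have hT0 : (A.natAbs : ℤ) ≤ T ∧ (B.natAbs : ℤ) ≤ T := by
      constructor <;> (rw [hT]; omega)
    have hp1 : (1:ℤ) ≤ p := by exact_mod_cast hp
    have hq1 : (1:ℤ) ≤ q := by exact_mod_cast hq
    have hAabs : -(A.natAbs : ℤ) ≤ A := by omega
    have hBabs : B ≤ (B.natAbs : ℤ) := by omega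
    have hnn1 : 0 ≤ A + (q:ℤ) * T := by nlinarith [hT0.1]
    have hnn2 : 0 ≤ (p:ℤ) * T - B := by nlinarith [hT0.2]
    refine ⟨(A + (q:ℤ) * T).toNat, ((p:ℤ) * T - B).toNat, ?_⟩
    have hZ : ((A + (q:ℤ) * T).toNat : ℤ) * p
        = (Nat.gcd p q : ℤ) + (((p:ℤ) * T - B).toNat : ℤ) * q := by
      rw [Int.toNat_of_nonneg hnn1, Int.toNat_of_nonneg hnn2]
      linear_combination -hb
    exact_mod_cast hZ
  intro k hk
  have e1 : a (k + Nat.gcd p q + v * q) = a (k + Nat.gcd p q) :=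
    perMul a q h2 v _ (by omega)
  have e2 : a (k + u * p) = a k := perMul a p h1 u k hk
  have e3 : k + Nat.gcd p q + v * q = k + u * p := by rw [huv]; ring
  rw [← e1, e3, e2]

lemma cqShift (s : ℝ) (i j : ℕ) (h : completeQuotient s i = completeQuotient s j) :
    ∀ m, completeQuotient s (i + m) = completeQuotient s (j + m) := by
  intro m
  induction m with
  | zero => simpa using h
  | succ m ih =>
    have e1 : i + (m + 1) = (i + m) + 1 := rfl
    have e2 : j + (m + 1) = (j + m) + 1 := rfl
    rw [e1, e2, cq_succ, cq_succ, ih]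

/-- `E = (7·67^6 + 4)^2 + 22·67^6` is not a perfect square,
`⌊√E⌋ = 633208675188`, and the partial quotients `a_k = ⌊x_k⌋` of the simple
continued fraction of `√E` are periodic for `k ≥ 1` with minimal period 46. -/
theorem stmt_14 (E : ℤ) (hE : E = (7 * 67 ^ 6 + 4) ^ 2 + 22 * 67 ^ 6)
    (a : ℕ → ℤ) (ha : ∀ k, a k = ⌊completeQuotient (Real.sqrt (E : ℝ)) k⌋) :
    ¬ IsSquare E ∧
    ⌊Real.sqrt (E : ℝ)⌋ = 633208675188 ∧
    (∀ k, 1 ≤ k → a (k + 46) = a k) ∧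
    (∀ p : ℕ, 0 < p → (∀ k, 1 ≤ k → a (k + p) = a k) → 46 ≤ p) := by
  have hEv : E = 400953226334065753892687 := by rw [hE]; norm_num
  subst hEv
  set s : ℝ := Real.sqrt ((400953226334065753892687 : ℤ) : ℝ) with hsdef
  have hE0 : (0:ℝ) ≤ ((400953226334065753892687 : ℤ) : ℝ) := by norm_num
  have hs : s ^ 2 = ((400953226334065753892687 : ℤ) : ℝ) := Real.sq_sqrt hE0
  have hsnn : 0 ≤ s := Real.sqrt_nonneg _
  have hs' : s ^ 2 = 400953226334065753892687 := by push_cast at hs; exact hs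
  have hn : ((633208675188 : ℤ) : ℝ) ≤ s := by
    push_cast
    by_contra hc
    push_neg at hc
    have h2 : s ^ 2 < (633208675188:ℝ) ^ 2 := by
      apply sq_lt_sq' _ hc
      linarith
    rw [hs'] at h2
    norm_num at h2
  have hn' : s < ((633208675188 : ℤ) : ℝ) + 1 := by
    push_cast
    by_contra hc
    push_neg at hc
    have h2 : (633208675188 + 1 : ℝ) ^ 2 ≤ s ^ 2 := by
      apply pow_le_pow_left₀ (by norm_num) hc
    rw [hs'] at h2
    norm_num at h2
  have h0 : completeQuotient s 0 = (s + ((0:ℤ):ℝ)) / ((1:ℤ):ℝ) := by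
    simp [completeQuotient]
  have c0 := cfStep s 400953226334065753892687 633208675188 hs hn hn' 0 0 1 633208675188 633208675188 723667057343 h0 (by norm_num) (by norm_num) (by norm_num) (by norm_num) (by norm_num) (by norm_num)
  have c1 := cfStep s 400953226334065753892687 633208675188 hs hn hn' 1 633208675188 723667057343 1 90458382155 542750293034 (c0).2 (by norm_num) (by norm_num) (by norm_num) (by norm_num) (by norm_num) (by norm_num)
  have c2 := cfStep s 400953226334065753892687 633208675188 hs hn hn' 2 90458382155 542750293034 1 452291910879 361833528619 (c1).2 (by norm_num) (by norm_num) (by norm_num) (by norm_num) (by norm_num) (by norm_num)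
  have c3 := cfStep s 400953226334065753892687 633208675188 hs hn hn' 3 452291910879 361833528619 3 633208674978 737 (c2).2 (by norm_num) (by norm_num) (by norm_num) (by norm_num) (by norm_num) (by norm_num)
  have c4 := cfStep s 400953226334065753892687 633208675188 hs hn hn' 4 633208674978 737 1718341045 633208675187 2700250214 (c3).2 (by norm_num) (by norm_num) (by norm_num) (by norm_num) (by norm_num) (by norm_num)
  have c5 := cfStep s 400953226334065753892687 633208675188 hs hn hn' 5 633208675187 2700250214 469 633208675179 4489 (c4).2 (by norm_num) (by norm_num) (by norm_num) (by norm_num) (by norm_num) (by norm_num)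
  have c6 := cfStep s 400953226334065753892687 633208675188 hs hn hn' 6 633208675179 4489 282115694 633208675187 443324662 (c5).2 (by norm_num) (by norm_num) (by norm_num) (by norm_num) (by norm_num) (by norm_num)
  have c7 := cfStep s 400953226334065753892687 633208675188 hs hn hn' 7 633208675187 443324662 2856 632926559485 805722449401 (c6).2 (by norm_num) (by norm_num) (by norm_num) (by norm_num) (by norm_num) (by norm_num)
  have c8 := cfStep s 400953226334065753892687 633208675188 hs hn hn' 8 632926559485 805722449401 1 172795889916 460573994231 (c7).2 (by norm_num) (by norm_num) (by norm_num) (by norm_num) (by norm_num) (by norm_num)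
  have c9 := cfStep s 400953226334065753892687 633208675188 hs hn hn' 9 172795889916 460573994231 1 287778104315 690740235002 (c8).2 (by norm_num) (by norm_num) (by norm_num) (by norm_num) (by norm_num) (by norm_num)
  have c10 := cfStep s 400953226334065753892687 633208675188 hs hn hn' 10 287778104315 690740235002 1 402962130687 345389967859 (c9).2 (by norm_num) (by norm_num) (by norm_num) (by norm_num) (by norm_num) (by norm_num)
  have c11 := cfStep s 400953226334065753892687 633208675188 hs hn hn' 11 402962130687 345389967859 3 633207772890 3308393 (c10).2 (by norm_num) (by norm_num) (by norm_num) (by norm_num) (by norm_num) (by norm_num)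
  have c12 := cfStep s 400953226334065753892687 633208675188 hs hn hn' 12 633207772890 3308393 382789 633208675187 601526 (c11).2 (by norm_num) (by norm_num) (by norm_num) (by norm_num) (by norm_num) (by norm_num)
  have c13 := cfStep s 400953226334065753892687 633208675188 hs hn hn' 13 633208675187 601526 2105341 633208675179 20151121 (c12).2 (by norm_num) (by norm_num) (by norm_num) (by norm_num) (by norm_num) (by norm_num)
  have c14 := cfStep s 400953226334065753892687 633208675188 hs hn hn' 14 633208675179 20151121 62846 633208675187 98758 (c13).2 (by norm_num) (by norm_num) (by norm_num) (by norm_num) (by norm_num) (by norm_num)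
  have c15 := cfStep s 400953226334065753892687 633208675188 hs hn hn' 15 633208675187 98758 12823440 633208612333 806024648881 (c14).2 (by norm_num) (by norm_num) (by norm_num) (by norm_num) (by norm_num) (by norm_num)
  have c16 := cfStep s 400953226334065753892687 633208675188 hs hn hn' 16 633208612333 806024648881 1 172816036548 460392674543 (c15).2 (by norm_num) (by norm_num) (by norm_num) (by norm_num) (by norm_num) (by norm_num)
  have c17 := cfStep s 400953226334065753892687 633208675188 hs hn hn' 17 172816036548 460392674543 1 287576637995 691264047434 (c16).2 (by norm_num) (by norm_num) (by norm_num) (by norm_num) (by norm_num) (by norm_num)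
  have c18 := cfStep s 400953226334065753892687 633208675188 hs hn hn' 18 287576637995 691264047434 1 403687409439 344281903099 (c17).2 (by norm_num) (by norm_num) (by norm_num) (by norm_num) (by norm_num) (by norm_num)
  have c19 := cfStep s 400953226334065753892687 633208675188 hs hn hn' 19 403687409439 344281903099 3 629158299858 14851376177 (c18).2 (by norm_num) (by norm_num) (by norm_num) (by norm_num) (by norm_num) (by norm_num)
  have c20 := cfStep s 400953226334065753892687 633208675188 hs hn hn' 20 629158299858 14851376177 85 633208675187 134 (c19).2 (by norm_num) (by norm_num) (by norm_num) (by norm_num) (by norm_num) (by norm_num)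
  have c21 := cfStep s 400953226334065753892687 633208675188 hs hn hn' 21 633208675187 134 9450875749 633208675179 90458382169 (c20).2 (by norm_num) (by norm_num) (by norm_num) (by norm_num) (by norm_num) (by norm_num)
  have c22 := cfStep s 400953226334065753892687 633208675188 hs hn hn' 22 633208675179 90458382169 14 633208675187 22 (c21).2 (by norm_num) (by norm_num) (by norm_num) (by norm_num) (by norm_num) (by norm_num)
  have c23 := cfStep s 400953226334065753892687 633208675188 hs hn hn' 23 633208675187 22 57564425017 633208675187 90458382169 (c22).2 (by norm_num) (by norm_num) (by norm_num) (by norm_num) (by norm_num) (by norm_num)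
  have c24 := cfStep s 400953226334065753892687 633208675188 hs hn hn' 24 633208675187 90458382169 14 633208675179 134 (c23).2 (by norm_num) (by norm_num) (by norm_num) (by norm_num) (by norm_num) (by norm_num)
  have c25 := cfStep s 400953226334065753892687 633208675188 hs hn hn' 25 633208675179 134 9450875749 633208675187 14851376177 (c24).2 (by norm_num) (by norm_num) (by norm_num) (by norm_num) (by norm_num) (by norm_num)
  have c26 := cfStep s 400953226334065753892687 633208675188 hs hn hn' 26 633208675187 14851376177 85 629158299858 344281903099 (c25).2 (by norm_num) (by norm_num) (by norm_num) (by norm_num) (by norm_num) (by norm_num)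
  have c27 := cfStep s 400953226334065753892687 633208675188 hs hn hn' 27 629158299858 344281903099 3 403687409439 691264047434 (c26).2 (by norm_num) (by norm_num) (by norm_num) (by norm_num) (by norm_num) (by norm_num)
  have c28 := cfStep s 400953226334065753892687 633208675188 hs hn hn' 28 403687409439 691264047434 1 287576637995 460392674543 (c27).2 (by norm_num) (by norm_num) (by norm_num) (by norm_num) (by norm_num) (by norm_num)
  have c29 := cfStep s 400953226334065753892687 633208675188 hs hn hn' 29 287576637995 460392674543 1 172816036548 806024648881 (c28).2 (by norm_num) (by norm_num) (by norm_num) (by norm_num) (by norm_num) (by norm_num)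
  have c30 := cfStep s 400953226334065753892687 633208675188 hs hn hn' 30 172816036548 806024648881 1 633208612333 98758 (c29).2 (by norm_num) (by norm_num) (by norm_num) (by norm_num) (by norm_num) (by norm_num)
  have c31 := cfStep s 400953226334065753892687 633208675188 hs hn hn' 31 633208612333 98758 12823440 633208675187 20151121 (c30).2 (by norm_num) (by norm_num) (by norm_num) (by norm_num) (by norm_num) (by norm_num)
  have c32 := cfStep s 400953226334065753892687 633208675188 hs hn hn' 32 633208675187 20151121 62846 633208675179 601526 (c31).2 (by norm_num) (by norm_num) (by norm_num) (by norm_num) (by norm_num) (by norm_num)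
  have c33 := cfStep s 400953226334065753892687 633208675188 hs hn hn' 33 633208675179 601526 2105341 633208675187 3308393 (c32).2 (by norm_num) (by norm_num) (by norm_num) (by norm_num) (by norm_num) (by norm_num)
  have c34 := cfStep s 400953226334065753892687 633208675188 hs hn hn' 34 633208675187 3308393 382789 633207772890 345389967859 (c33).2 (by norm_num) (by norm_num) (by norm_num) (by norm_num) (by norm_num) (by norm_num)
  have c35 := cfStep s 400953226334065753892687 633208675188 hs hn hn' 35 633207772890 345389967859 3 402962130687 690740235002 (c34).2 (by norm_num) (by norm_num) (by norm_num) (by norm_num) (by norm_num) (by norm_num)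
  have c36 := cfStep s 400953226334065753892687 633208675188 hs hn hn' 36 402962130687 690740235002 1 287778104315 460573994231 (c35).2 (by norm_num) (by norm_num) (by norm_num) (by norm_num) (by norm_num) (by norm_num)
  have c37 := cfStep s 400953226334065753892687 633208675188 hs hn hn' 37 287778104315 460573994231 1 172795889916 805722449401 (c36).2 (by norm_num) (by norm_num) (by norm_num) (by norm_num) (by norm_num) (by norm_num)
  have c38 := cfStep s 400953226334065753892687 633208675188 hs hn hn' 38 172795889916 805722449401 1 632926559485 443324662 (c37).2 (by norm_num) (by norm_num) (by norm_num) (by norm_num) (by norm_num) (by norm_num)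
  have c39 := cfStep s 400953226334065753892687 633208675188 hs hn hn' 39 632926559485 443324662 2856 633208675187 4489 (c38).2 (by norm_num) (by norm_num) (by norm_num) (by norm_num) (by norm_num) (by norm_num)
  have c40 := cfStep s 400953226334065753892687 633208675188 hs hn hn' 40 633208675187 4489 282115694 633208675179 2700250214 (c39).2 (by norm_num) (by norm_num) (by norm_num) (by norm_num) (by norm_num) (by norm_num)
  have c41 := cfStep s 400953226334065753892687 633208675188 hs hn hn' 41 633208675179 2700250214 469 633208675187 737 (c40).2 (by norm_num) (by norm_num) (by norm_num) (by norm_num) (by norm_num) (by norm_num)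
  have c42 := cfStep s 400953226334065753892687 633208675188 hs hn hn' 42 633208675187 737 1718341045 633208674978 361833528619 (c41).2 (by norm_num) (by norm_num) (by norm_num) (by norm_num) (by norm_num) (by norm_num)
  have c43 := cfStep s 400953226334065753892687 633208675188 hs hn hn' 43 633208674978 361833528619 3 452291910879 542750293034 (c42).2 (by norm_num) (by norm_num) (by norm_num) (by norm_num) (by norm_num) (by norm_num)
  have c44 := cfStep s 400953226334065753892687 633208675188 hs hn hn' 44 452291910879 542750293034 1 90458382155 723667057343 (c43).2 (by norm_num) (by norm_num) (by norm_num) (by norm_num) (by norm_num) (by norm_num)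
  have c45 := cfStep s 400953226334065753892687 633208675188 hs hn hn' 45 90458382155 723667057343 1 633208675188 1 (c44).2 (by norm_num) (by norm_num) (by norm_num) (by norm_num) (by norm_num) (by norm_num)
  have c46 := cfStep s 400953226334065753892687 633208675188 hs hn hn' 46 633208675188 1 1266417350376 633208675188 723667057343 (c45).2 (by norm_num) (by norm_num) (by norm_num) (by norm_num) (by norm_num) (by norm_num)
  have hper47 : completeQuotient s 47 = completeQuotient s 1 := by
    rw [(c46).2, (c0).2]
  have hper46 : ∀ k, 1 ≤ k → a (k + 46) = a k := by
    intro k hk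
    obtain ⟨m, rfl⟩ : ∃ m, k = 1 + m := ⟨k - 1, by omega⟩
    rw [ha, ha, show 1 + m + 46 = 47 + m from by omega,
      cqShift s 47 1 hper47 m]
  refine ⟨?_, ?_, hper46, ?_⟩
  · rintro ⟨r, hr⟩
    have h1 : (633208675188:ℤ) * 633208675188 < r * r := by rw [← hr]; norm_num
    have h2 : r * r < (633208675189:ℤ) * 633208675189 := by rw [← hr]; norm_num
    have hm : ((r.natAbs : ℤ)) * (r.natAbs : ℤ) = r * r := by
      exact_mod_cast Int.natAbs_mul_self
    have hml : (633208675188:ℤ) < (r.natAbs : ℤ) := by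
      by_contra hc
      push_neg at hc
      have h3 : ((r.natAbs : ℤ)) * (r.natAbs : ℤ) ≤ (633208675188:ℤ) * 633208675188 :=
        mul_le_mul hc hc (by positivity) (by norm_num)
      rw [hm] at h3
      linarith
    have hmu : ((r.natAbs : ℤ)) < 633208675189 := by
      by_contra hc
      push_neg at hc
      have h3 : (633208675189:ℤ) * 633208675189 ≤ ((r.natAbs : ℤ)) * (r.natAbs : ℤ) :=
        mul_le_mul hc hc (by norm_num) (by positivity)
      rw [hm] at h3
      linarith
    omega
  · rw [Int.floor_eq_iff]
    exact ⟨hn, hn'⟩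
  · intro p hp hpper
    by_contra hlt
    push_neg at hlt
    have hg := perGcd a p 46 hp (by norm_num) hpper hper46
    have hgdvd : Nat.gcd p 46 ∣ 46 := Nat.gcd_dvd_right p 46
    have hgle : Nat.gcd p 46 ≤ p := Nat.le_of_dvd hp (Nat.gcd_dvd_left p 46)
    have hgpos : 0 < Nat.gcd p 46 := Nat.gcd_pos_of_pos_right p (by norm_num)
    have hcases : Nat.gcd p 46 = 1 ∨ Nat.gcd p 46 = 2 ∨ Nat.gcd p 46 = 23 := by
      have hglt : Nat.gcd p 46 < 46 := by omega
      interval_cases h : Nat.gcd p 46 <;> omega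
    have ha2 : a 2 = 1 := by rw [ha]; exact (c2).1
    have ha3 : a 3 = 3 := by rw [ha]; exact (c3).1
    have ha4 : a 4 = 1718341045 := by rw [ha]; exact (c4).1
    have ha1 : a 1 = 1 := by rw [ha]; exact (c1).1
    have ha24 : a 24 = 14 := by rw [ha]; exact (c24).1
    rcases hcases with h | h | h
    · have h5 := hg 2 (by norm_num)
      rw [h, show (2 + 1 : ℕ) = 3 from rfl, ha3, ha2] at h5
      norm_num at h5
    · have h5 := hg 2 (by norm_num)
      rw [h, show (2 + 2 : ℕ) = 4 from rfl, ha4, ha2] at h5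
      norm_num at h5
    · have h5 := hg 1 (by norm_num)
      rw [h, show (1 + 23 : ℕ) = 24 from rfl, ha24, ha1] at h5
      norm_num at h5
end

section
/- Let E = (5·43^{11} + 19875)^2 + 35·43^{11}. Then E is not a perfect square, ⌊√E⌋ = 4646468697356133413, and the sequence (a_k)_{k≥1} of partial quotients of the simple continued fraction expansion of √E is periodic with minimal period 70, i.e. a_{k+70} = a_k for all k ≥ 1 and no smaller positive integer has this property. -/
lemma sqrt_step (D : ℤ) (x : ℝ) (hx2 : x ^ 2 = (D : ℝ)) (hx0 : 0 ≤ x)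
    (P Q A P' Q' : ℤ) (hQ : 0 < Q) (hP' : P' = A * Q - P) (hQ' : Q * Q' = D - P' ^ 2)
    (h0 : 0 ≤ P') (h1 : P' ^ 2 < D) (h2 : D < (P' + Q) ^ 2)
    (y : ℝ) (hy : y = (x + P) / Q) :
    ⌊y⌋ = A ∧ 1 / (y - (⌊y⌋ : ℝ)) = (x + P') / Q' := by
  have hQR : (0:ℝ) < (Q:ℝ) := by exact_mod_cast hQ
  have h0R : (0:ℝ) ≤ (P':ℝ) := by exact_mod_cast h0
  have h1R : (P':ℝ)^2 < x^2 := by rw [hx2]; exact_mod_cast h1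
  have h2R : x^2 < ((P':ℝ) + Q)^2 := by rw [hx2]; exact_mod_cast h2
  have hxP : (P':ℝ) < x := by nlinarith
  have hxU : x < (P':ℝ) + Q := by nlinarith
  have hP'R : (P':ℝ) = A * Q - P := by exact_mod_cast hP'
  have hfl : ⌊y⌋ = A := by
    rw [Int.floor_eq_iff]
    constructor
    · rw [hy, le_div_iff₀ hQR]; nlinarith
    · rw [hy, div_lt_iff₀ hQR]; nlinarith
  have hq'z : (0:ℤ) < Q' := by nlinarith
  have hQ'R : (0:ℝ) < (Q':ℝ) := by exact_mod_cast hq'z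
  have hQQ'R : (Q:ℝ) * Q' = x^2 - (P':ℝ)^2 := by rw [hx2]; exact_mod_cast hQ'
  refine ⟨hfl, ?_⟩
  rw [hfl, hy]
  have hyx : (x + P)/Q - (A:ℝ) = (x - P')/Q := by field_simp; rw [hP'R]; ring
  rw [hyx, one_div_div, div_eq_div_iff (by linarith) (ne_of_gt hQ'R)]
  nlinarith

/-- `E = (5·43^11 + 19875)^2 + 35·43^11` is not a perfect square,
`⌊√E⌋ = 4646468697356133413`, and the partial quotients `a_k = ⌊x_k⌋` of the
simple continued fraction of `√E` are periodic for `k ≥ 1` with minimal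
period 70. -/
theorem stmt_16 (E : ℤ) (hE : E = (5 * 43 ^ 11 + 19875) ^ 2 + 35 * 43 ^ 11)
    (a : ℕ → ℤ) (ha : ∀ k, a k = ⌊completeQuotient (Real.sqrt (E : ℝ)) k⌋) :
    ¬ IsSquare E ∧
    ⌊Real.sqrt (E : ℝ)⌋ = 4646468697356133413 ∧
    (∀ k, 1 ≤ k → a (k + 70) = a k) ∧
    (∀ p : ℕ, 0 < p → (∀ k, 1 ≤ k → a (k + p) = a k) → 70 ≤ p) := by
  subst hE
  set E : ℤ := (5 * 43 ^ 11 + 19875) ^ 2 + 35 * 43 ^ 11 with hEdef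
  set x : ℝ := Real.sqrt (E : ℝ) with hxdef
  have hEpos : (0:ℝ) ≤ (E:ℝ) := by norm_num [hEdef]
  have hx0 : 0 ≤ x := Real.sqrt_nonneg _
  have hx2 : x ^ 2 = (E : ℝ) := Real.sq_sqrt hEpos
  have hnsq : ¬ IsSquare E := by
    rintro ⟨m, hm⟩
    have h1 : (4646468697356133413:ℤ)^2 < E := by norm_num [hEdef]
    have h2 : E < (4646468697356133414:ℤ)^2 := by norm_num [hEdef]
    rcases le_or_gt m 0 with hm0 | hm0
    · rcases le_or_gt (-m) 4646468697356133413 with h | h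
      · nlinarith
      · nlinarith
    · rcases le_or_gt m 4646468697356133413 with h | h
      · nlinarith
      · nlinarith
  have h0 : completeQuotient x 0 = (x + ((0:ℤ):ℝ)) / ((1:ℤ):ℝ) := by
    simp [completeQuotient]
  have s0 := sqrt_step E x hx2 hx0 0 1 4646468697356133413 4646468697356133413 4646468697355994276 (by norm_num) (by norm_num [hEdef]) (by norm_num [hEdef]) (by norm_num) (by norm_num [hEdef]) (by norm_num [hEdef]) _ h0
  have h1 : completeQuotient x 1 = (x + ((4646468697356133413:ℤ):ℝ)) / ((4646468697355994276:ℤ):ℝ) := s0.2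
  have s1 := sqrt_step E x hx2 hx0 4646468697356133413 4646468697355994276 2 4646468697355855139 556549 (by norm_num) (by norm_num [hEdef]) (by norm_num [hEdef]) (by norm_num) (by norm_num [hEdef]) (by norm_num [hEdef]) _ h1
  have h2 : completeQuotient x 2 = (x + ((4646468697355855139:ℤ):ℝ)) / ((556549:ℤ):ℝ) := s1.2
  have s2 := sqrt_step E x hx2 hx0 4646468697355855139 556549 16697428968001 4646468697356133410 58441001388005 (by norm_num) (by norm_num [hEdef]) (by norm_num [hEdef]) (by norm_num) (by norm_num [hEdef]) (by norm_num [hEdef]) _ h2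
  have h3 : completeQuotient x 3 = (x + ((4646468697356133410:ℤ):ℝ)) / ((58441001388005:ℤ):ℝ) := s2.2
  have s3 := sqrt_step E x hx2 hx0 4646468697356133410 58441001388005 159014 4646468697356093660 6321363049 (by norm_num) (by norm_num [hEdef]) (by norm_num [hEdef]) (by norm_num) (by norm_num [hEdef]) (by norm_num [hEdef]) _ h3
  have h4 : completeQuotient x 4 = (x + ((4646468697356093660:ℤ):ℝ)) / ((6321363049:ℤ):ℝ) := s3.2
  have s4 := sqrt_step E x hx2 hx0 4646468697356093660 6321363049 1470084430 4646468697356133410 5145295505 (by norm_num) (by norm_num [hEdef]) (by norm_num [hEdef]) (by norm_num) (by norm_num [hEdef]) (by norm_num [hEdef]) _ h4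
  have h5 : completeQuotient x 5 = (x + ((4646468697356133410:ℤ):ℝ)) / ((5145295505:ℤ):ℝ) := s4.2
  have s5 := sqrt_step E x hx2 hx0 4646468697356133410 5145295505 1806103728 4646468695886009230 2655196768442306089 (by norm_num) (by norm_num [hEdef]) (by norm_num [hEdef]) (by norm_num) (by norm_num [hEdef]) (by norm_num [hEdef]) _ h5
  have h6 : completeQuotient x 6 = (x + ((4646468695886009230:ℤ):ℝ)) / ((2655196768442306089:ℤ):ℝ) := s5.2
  have s6 := sqrt_step E x hx2 hx0 4646468695886009230 2655196768442306089 3 3319121609440909037 3982041264480596084 (by norm_num) (by norm_num [hEdef]) (by norm_num [hEdef]) (by norm_num) (by norm_num [hEdef]) (by norm_num [hEdef]) _ h6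
  have h7 : completeQuotient x 7 = (x + ((3319121609440909037:ℤ):ℝ)) / ((3982041264480596084:ℤ):ℝ) := s6.2
  have s7 := sqrt_step E x hx2 hx0 3319121609440909037 3982041264480596084 2 4644960919520283131 3518148283557901 (by norm_num) (by norm_num [hEdef]) (by norm_num [hEdef]) (by norm_num) (by norm_num [hEdef]) (by norm_num [hEdef]) _ h7
  have h8 : completeQuotient x 8 = (x + ((4644960919520283131:ℤ):ℝ)) / ((3518148283557901:ℤ):ℝ) := s7.2
  have s8 := sqrt_step E x hx2 hx0 4644960919520283131 3518148283557901 2641 4646468697356133410 9245 (by norm_num) (by norm_num [hEdef]) (by norm_num [hEdef]) (by norm_num) (by norm_num [hEdef]) (by norm_num [hEdef]) _ h8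
  have h9 : completeQuotient x 9 = (x + ((4646468697356133410:ℤ):ℝ)) / ((9245:ℤ):ℝ) := s8.2
  have s9 := sqrt_step E x hx2 hx0 4646468697356133410 9245 1005185223873690 4646468697356130640 2787881218413679201 (by norm_num) (by norm_num [hEdef]) (by norm_num [hEdef]) (by norm_num) (by norm_num [hEdef]) (by norm_num [hEdef]) _ h9
  have h10 : completeQuotient x 10 = (x + ((4646468697356130640:ℤ):ℝ)) / ((2787881218413679201:ℤ):ℝ) := s9.2
  have s10 := sqrt_step E x hx2 hx0 4646468697356130640 2787881218413679201 3 3717174957884906963 2787881218413680276 (by norm_num) (by norm_num [hEdef]) (by norm_num [hEdef]) (by norm_num) (by norm_num [hEdef]) (by norm_num [hEdef]) _ h10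
  have h11 : completeQuotient x 11 = (x + ((3717174957884906963:ℤ):ℝ)) / ((2787881218413680276:ℤ):ℝ) := s10.2
  have s11 := sqrt_step E x hx2 hx0 3717174957884906963 2787881218413680276 2 1858587478942453589 6505056176298585949 (by norm_num) (by norm_num [hEdef]) (by norm_num [hEdef]) (by norm_num) (by norm_num [hEdef]) (by norm_num [hEdef]) _ h11
  have h12 : completeQuotient x 12 = (x + ((1858587478942453589:ℤ):ℝ)) / ((6505056176298585949:ℤ):ℝ) := s11.2
  have s12 := sqrt_step E x hx2 hx0 1858587478942453589 6505056176298585949 1 4646468697356132360 1505 (by norm_num) (by norm_num [hEdef]) (by norm_num [hEdef]) (by norm_num) (by norm_num [hEdef]) (by norm_num [hEdef]) _ h12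
  have h13 : completeQuotient x 13 = (x + ((4646468697356132360:ℤ):ℝ)) / ((1505:ℤ):ℝ) := s12.2
  have s13 := sqrt_step E x hx2 hx0 4646468697356132360 1505 6174709232366954 4646468697356133410 21611482313284249 (by norm_num) (by norm_num [hEdef]) (by norm_num [hEdef]) (by norm_num) (by norm_num [hEdef]) (by norm_num [hEdef]) _ h13
  have h14 : completeQuotient x 14 = (x + ((4646468697356133410:ℤ):ℝ)) / ((21611482313284249:ℤ):ℝ) := s13.2
  have s14 := sqrt_step E x hx2 hx0 4646468697356133410 21611482313284249 430 4646468697356093660 17094005 (by norm_num) (by norm_num [hEdef]) (by norm_num [hEdef]) (by norm_num) (by norm_num [hEdef]) (by norm_num [hEdef]) _ h14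
  have h15 : completeQuotient x 15 = (x + ((4646468697356093660:ℤ):ℝ)) / ((17094005:ℤ):ℝ) := s14.2
  have s15 := sqrt_step E x hx2 hx0 4646468697356093660 17094005 543637222214 4646468697356133410 1902730277749 (by norm_num) (by norm_num [hEdef]) (by norm_num [hEdef]) (by norm_num) (by norm_num [hEdef]) (by norm_num [hEdef]) _ h15
  have h16 : completeQuotient x 16 = (x + ((4646468697356133410:ℤ):ℝ)) / ((1902730277749:ℤ):ℝ) := s15.2
  have s16 := sqrt_step E x hx2 hx0 4646468697356133410 1902730277749 4884001 4646467881900260339 3982687299551731076 (by norm_num) (by norm_num [hEdef]) (by norm_num [hEdef]) (by norm_num) (by norm_num [hEdef]) (by norm_num [hEdef]) _ h16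
  have h17 : completeQuotient x 17 = (x + ((4646467881900260339:ℤ):ℝ)) / ((3982687299551731076:ℤ):ℝ) := s16.2
  have s17 := sqrt_step E x hx2 hx0 4646467881900260339 3982687299551731076 2 3318906717203201813 2655124232124394801 (by norm_num) (by norm_num [hEdef]) (by norm_num [hEdef]) (by norm_num) (by norm_num [hEdef]) (by norm_num [hEdef]) _ h17
  have h18 : completeQuotient x 18 = (x + ((3318906717203201813:ℤ):ℝ)) / ((2655124232124394801:ℤ):ℝ) := s17.2
  have s18 := sqrt_step E x hx2 hx0 3318906717203201813 2655124232124394801 3 4646465979169982590 9513651388745 (by norm_num) (by norm_num [hEdef]) (by norm_num [hEdef]) (by norm_num) (by norm_num [hEdef]) (by norm_num [hEdef]) _ h18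
  have h19 : completeQuotient x 19 = (x + ((4646465979169982590:ℤ):ℝ)) / ((9513651388745:ℤ):ℝ) := s18.2
  have s19 := sqrt_step E x hx2 hx0 4646465979169982590 9513651388745 976800 4646468697356133410 3418801 (by norm_num) (by norm_num [hEdef]) (by norm_num [hEdef]) (by norm_num) (by norm_num [hEdef]) (by norm_num [hEdef]) _ h19
  have h20 : completeQuotient x 20 = (x + ((4646468697356133410:ℤ):ℝ)) / ((3418801:ℤ):ℝ) := s19.2
  have s20 := sqrt_step E x hx2 hx0 4646468697356133410 3418801 2718186111070 4646468697356093660 108057411566421245 (by norm_num) (by norm_num [hEdef]) (by norm_num [hEdef]) (by norm_num) (by norm_num [hEdef]) (by norm_num [hEdef]) _ h20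
  have h21 : completeQuotient x 21 = (x + ((4646468697356093660:ℤ):ℝ)) / ((108057411566421245:ℤ):ℝ) := s20.2
  have s21 := sqrt_step E x hx2 hx0 4646468697356093660 108057411566421245 86 4646468697356133410 301 (by norm_num) (by norm_num [hEdef]) (by norm_num [hEdef]) (by norm_num) (by norm_num [hEdef]) (by norm_num [hEdef]) _ h21
  have h22 : completeQuotient x 22 = (x + ((4646468697356133410:ℤ):ℝ)) / ((301:ℤ):ℝ) := s21.2
  have s22 := sqrt_step E x hx2 hx0 4646468697356133410 301 30873546161834773 4646468697356133263 4646468697356132876 (by norm_num) (by norm_num [hEdef]) (by norm_num [hEdef]) (by norm_num) (by norm_num [hEdef]) (by norm_num [hEdef]) _ h22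
  have h23 : completeQuotient x 23 = (x + ((4646468697356133263:ℤ):ℝ)) / ((4646468697356132876:ℤ):ℝ) := s22.2
  have s23 := sqrt_step E x hx2 hx0 4646468697356133263 4646468697356132876 2 4646468697356132489 1849 (by norm_num) (by norm_num [hEdef]) (by norm_num [hEdef]) (by norm_num) (by norm_num [hEdef]) (by norm_num [hEdef]) _ h23
  have h24 : completeQuotient x 24 = (x + ((4646468697356132489:ℤ):ℝ)) / ((1849:ℤ):ℝ) := s23.2
  have s24 := sqrt_step E x hx2 hx0 4646468697356132489 1849 5025926119368451 4646468697356133410 17590741417789505 (by norm_num) (by norm_num [hEdef]) (by norm_num [hEdef]) (by norm_num) (by norm_num [hEdef]) (by norm_num [hEdef]) _ h24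
  have h25 : completeQuotient x 25 = (x + ((4646468697356133410:ℤ):ℝ)) / ((17590741417789505:ℤ):ℝ) := s24.2
  have s25 := sqrt_step E x hx2 hx0 4646468697356133410 17590741417789505 528 4641442771236725230 2653688991047520889 (by norm_num) (by norm_num [hEdef]) (by norm_num [hEdef]) (by norm_num) (by norm_num [hEdef]) (by norm_num [hEdef]) _ h25
  have h26 : completeQuotient x 26 = (x + ((4641442771236725230:ℤ):ℝ)) / ((2653688991047520889:ℤ):ℝ) := s25.2
  have s26 := sqrt_step E x hx2 hx0 4641442771236725230 2653688991047520889 3 3319624201905837437 3983046449410452884 (by norm_num) (by norm_num [hEdef]) (by norm_num [hEdef]) (by norm_num) (by norm_num [hEdef]) (by norm_num [hEdef]) _ h26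
  have h27 : completeQuotient x 27 = (x + ((3319624201905837437:ℤ):ℝ)) / ((3983046449410452884:ℤ):ℝ) := s26.2
  have s27 := sqrt_step E x hx2 hx0 3319624201905837437 3983046449410452884 2 4646468696915068331 1029059101 (by norm_num) (by norm_num [hEdef]) (by norm_num [hEdef]) (by norm_num) (by norm_num [hEdef]) (by norm_num [hEdef]) _ h27
  have h28 : completeQuotient x 28 = (x + ((4646468696915068331:ℤ):ℝ)) / ((1029059101:ℤ):ℝ) := s27.2
  have s28 := sqrt_step E x hx2 hx0 4646468696915068331 1029059101 9030518641 4646468697356133410 31606815245 (by norm_num) (by norm_num [hEdef]) (by norm_num [hEdef]) (by norm_num) (by norm_num [hEdef]) (by norm_num [hEdef]) _ h28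
  have h29 : completeQuotient x 29 = (x + ((4646468697356133410:ℤ):ℝ)) / ((31606815245:ℤ):ℝ) := s28.2
  have s29 := sqrt_step E x hx2 hx0 4646468697356133410 31606815245 294016886 4646468697356093660 11688200277601 (by norm_num) (by norm_num [hEdef]) (by norm_num [hEdef]) (by norm_num) (by norm_num [hEdef]) (by norm_num [hEdef]) _ h29
  have h30 : completeQuotient x 30 = (x + ((4646468697356093660:ℤ):ℝ)) / ((11688200277601:ℤ):ℝ) := s29.2
  have s30 := sqrt_step E x hx2 hx0 4646468697356093660 11688200277601 795070 4646468697356133410 2782745 (by norm_num) (by norm_num [hEdef]) (by norm_num [hEdef]) (by norm_num) (by norm_num [hEdef]) (by norm_num [hEdef]) _ h30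
  have h31 : completeQuotient x 31 = (x + ((4646468697356133410:ℤ):ℝ)) / ((2782745:ℤ):ℝ) := s30.2
  have s31 := sqrt_step E x hx2 hx0 4646468697356133410 2782745 3339485793600 4646468697355298590 2787881218413429601 (by norm_num) (by norm_num [hEdef]) (by norm_num [hEdef]) (by norm_num) (by norm_num [hEdef]) (by norm_num [hEdef]) _ h31
  have h32 : completeQuotient x 32 = (x + ((4646468697355298590:ℤ):ℝ)) / ((2787881218413429601:ℤ):ℝ) := s31.2
  have s32 := sqrt_step E x hx2 hx0 4646468697355298590 2787881218413429601 3 3717174957884990213 2787881218413707876 (by norm_num) (by norm_num [hEdef]) (by norm_num [hEdef]) (by norm_num) (by norm_num [hEdef]) (by norm_num [hEdef]) _ h32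
  have h33 : completeQuotient x 33 = (x + ((3717174957884990213:ℤ):ℝ)) / ((2787881218413707876:ℤ):ℝ) := s32.2
  have s33 := sqrt_step E x hx2 hx0 3717174957884990213 2787881218413707876 2 1858587478942425539 6505056176298558949 (by norm_num) (by norm_num [hEdef]) (by norm_num [hEdef]) (by norm_num) (by norm_num [hEdef]) (by norm_num [hEdef]) _ h33
  have h34 : completeQuotient x 34 = (x + ((1858587478942425539:ℤ):ℝ)) / ((6505056176298558949:ℤ):ℝ) := s33.2
  have s34 := sqrt_step E x hx2 hx0 1858587478942425539 6505056176298558949 1 4646468697356133410 5 (by norm_num) (by norm_num [hEdef]) (by norm_num [hEdef]) (by norm_num) (by norm_num [hEdef]) (by norm_num [hEdef]) _ h34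
  have h35 : completeQuotient x 35 = (x + ((4646468697356133410:ℤ):ℝ)) / ((5:ℤ):ℝ) := s34.2
  have s35 := sqrt_step E x hx2 hx0 4646468697356133410 5 1858587478942453364 4646468697356133410 6505056176298558949 (by norm_num) (by norm_num [hEdef]) (by norm_num [hEdef]) (by norm_num) (by norm_num [hEdef]) (by norm_num [hEdef]) _ h35
  have h36 : completeQuotient x 36 = (x + ((4646468697356133410:ℤ):ℝ)) / ((6505056176298558949:ℤ):ℝ) := s35.2
  have s36 := sqrt_step E x hx2 hx0 4646468697356133410 6505056176298558949 1 1858587478942425539 2787881218413707876 (by norm_num) (by norm_num [hEdef]) (by norm_num [hEdef]) (by norm_num) (by norm_num [hEdef]) (by norm_num [hEdef]) _ h36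
  have h37 : completeQuotient x 37 = (x + ((1858587478942425539:ℤ):ℝ)) / ((2787881218413707876:ℤ):ℝ) := s36.2
  have s37 := sqrt_step E x hx2 hx0 1858587478942425539 2787881218413707876 2 3717174957884990213 2787881218413429601 (by norm_num) (by norm_num [hEdef]) (by norm_num [hEdef]) (by norm_num) (by norm_num [hEdef]) (by norm_num [hEdef]) _ h37
  have h38 : completeQuotient x 38 = (x + ((3717174957884990213:ℤ):ℝ)) / ((2787881218413429601:ℤ):ℝ) := s37.2
  have s38 := sqrt_step E x hx2 hx0 3717174957884990213 2787881218413429601 3 4646468697355298590 2782745 (by norm_num) (by norm_num [hEdef]) (by norm_num [hEdef]) (by norm_num) (by norm_num [hEdef]) (by norm_num [hEdef]) _ h38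
  have h39 : completeQuotient x 39 = (x + ((4646468697355298590:ℤ):ℝ)) / ((2782745:ℤ):ℝ) := s38.2
  have s39 := sqrt_step E x hx2 hx0 4646468697355298590 2782745 3339485793600 4646468697356133410 11688200277601 (by norm_num) (by norm_num [hEdef]) (by norm_num [hEdef]) (by norm_num) (by norm_num [hEdef]) (by norm_num [hEdef]) _ h39
  have h40 : completeQuotient x 40 = (x + ((4646468697356133410:ℤ):ℝ)) / ((11688200277601:ℤ):ℝ) := s39.2
  have s40 := sqrt_step E x hx2 hx0 4646468697356133410 11688200277601 795070 4646468697356093660 31606815245 (by norm_num) (by norm_num [hEdef]) (by norm_num [hEdef]) (by norm_num) (by norm_num [hEdef]) (by norm_num [hEdef]) _ h40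
  have h41 : completeQuotient x 41 = (x + ((4646468697356093660:ℤ):ℝ)) / ((31606815245:ℤ):ℝ) := s40.2
  have s41 := sqrt_step E x hx2 hx0 4646468697356093660 31606815245 294016886 4646468697356133410 1029059101 (by norm_num) (by norm_num [hEdef]) (by norm_num [hEdef]) (by norm_num) (by norm_num [hEdef]) (by norm_num [hEdef]) _ h41
  have h42 : completeQuotient x 42 = (x + ((4646468697356133410:ℤ):ℝ)) / ((1029059101:ℤ):ℝ) := s41.2
  have s42 := sqrt_step E x hx2 hx0 4646468697356133410 1029059101 9030518641 4646468696915068331 3983046449410452884 (by norm_num) (by norm_num [hEdef]) (by norm_num [hEdef]) (by norm_num) (by norm_num [hEdef]) (by norm_num [hEdef]) _ h42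
  have h43 : completeQuotient x 43 = (x + ((4646468696915068331:ℤ):ℝ)) / ((3983046449410452884:ℤ):ℝ) := s42.2
  have s43 := sqrt_step E x hx2 hx0 4646468696915068331 3983046449410452884 2 3319624201905837437 2653688991047520889 (by norm_num) (by norm_num [hEdef]) (by norm_num [hEdef]) (by norm_num) (by norm_num [hEdef]) (by norm_num [hEdef]) _ h43
  have h44 : completeQuotient x 44 = (x + ((3319624201905837437:ℤ):ℝ)) / ((2653688991047520889:ℤ):ℝ) := s43.2
  have s44 := sqrt_step E x hx2 hx0 3319624201905837437 2653688991047520889 3 4641442771236725230 17590741417789505 (by norm_num) (by norm_num [hEdef]) (by norm_num [hEdef]) (by norm_num) (by norm_num [hEdef]) (by norm_num [hEdef]) _ h44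
  have h45 : completeQuotient x 45 = (x + ((4641442771236725230:ℤ):ℝ)) / ((17590741417789505:ℤ):ℝ) := s44.2
  have s45 := sqrt_step E x hx2 hx0 4641442771236725230 17590741417789505 528 4646468697356133410 1849 (by norm_num) (by norm_num [hEdef]) (by norm_num [hEdef]) (by norm_num) (by norm_num [hEdef]) (by norm_num [hEdef]) _ h45
  have h46 : completeQuotient x 46 = (x + ((4646468697356133410:ℤ):ℝ)) / ((1849:ℤ):ℝ) := s45.2
  have s46 := sqrt_step E x hx2 hx0 4646468697356133410 1849 5025926119368451 4646468697356132489 4646468697356132876 (by norm_num) (by norm_num [hEdef]) (by norm_num [hEdef]) (by norm_num) (by norm_num [hEdef]) (by norm_num [hEdef]) _ h46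
  have h47 : completeQuotient x 47 = (x + ((4646468697356132489:ℤ):ℝ)) / ((4646468697356132876:ℤ):ℝ) := s46.2
  have s47 := sqrt_step E x hx2 hx0 4646468697356132489 4646468697356132876 2 4646468697356133263 301 (by norm_num) (by norm_num [hEdef]) (by norm_num [hEdef]) (by norm_num) (by norm_num [hEdef]) (by norm_num [hEdef]) _ h47
  have h48 : completeQuotient x 48 = (x + ((4646468697356133263:ℤ):ℝ)) / ((301:ℤ):ℝ) := s47.2
  have s48 := sqrt_step E x hx2 hx0 4646468697356133263 301 30873546161834773 4646468697356133410 108057411566421245 (by norm_num) (by norm_num [hEdef]) (by norm_num [hEdef]) (by norm_num) (by norm_num [hEdef]) (by norm_num [hEdef]) _ h48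
  have h49 : completeQuotient x 49 = (x + ((4646468697356133410:ℤ):ℝ)) / ((108057411566421245:ℤ):ℝ) := s48.2
  have s49 := sqrt_step E x hx2 hx0 4646468697356133410 108057411566421245 86 4646468697356093660 3418801 (by norm_num) (by norm_num [hEdef]) (by norm_num [hEdef]) (by norm_num) (by norm_num [hEdef]) (by norm_num [hEdef]) _ h49
  have h50 : completeQuotient x 50 = (x + ((4646468697356093660:ℤ):ℝ)) / ((3418801:ℤ):ℝ) := s49.2
  have s50 := sqrt_step E x hx2 hx0 4646468697356093660 3418801 2718186111070 4646468697356133410 9513651388745 (by norm_num) (by norm_num [hEdef]) (by norm_num [hEdef]) (by norm_num) (by norm_num [hEdef]) (by norm_num [hEdef]) _ h50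
  have h51 : completeQuotient x 51 = (x + ((4646468697356133410:ℤ):ℝ)) / ((9513651388745:ℤ):ℝ) := s50.2
  have s51 := sqrt_step E x hx2 hx0 4646468697356133410 9513651388745 976800 4646465979169982590 2655124232124394801 (by norm_num) (by norm_num [hEdef]) (by norm_num [hEdef]) (by norm_num) (by norm_num [hEdef]) (by norm_num [hEdef]) _ h51
  have h52 : completeQuotient x 52 = (x + ((4646465979169982590:ℤ):ℝ)) / ((2655124232124394801:ℤ):ℝ) := s51.2
  have s52 := sqrt_step E x hx2 hx0 4646465979169982590 2655124232124394801 3 3318906717203201813 3982687299551731076 (by norm_num) (by norm_num [hEdef]) (by norm_num [hEdef]) (by norm_num) (by norm_num [hEdef]) (by norm_num [hEdef]) _ h52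
  have h53 : completeQuotient x 53 = (x + ((3318906717203201813:ℤ):ℝ)) / ((3982687299551731076:ℤ):ℝ) := s52.2
  have s53 := sqrt_step E x hx2 hx0 3318906717203201813 3982687299551731076 2 4646467881900260339 1902730277749 (by norm_num) (by norm_num [hEdef]) (by norm_num [hEdef]) (by norm_num) (by norm_num [hEdef]) (by norm_num [hEdef]) _ h53
  have h54 : completeQuotient x 54 = (x + ((4646467881900260339:ℤ):ℝ)) / ((1902730277749:ℤ):ℝ) := s53.2
  have s54 := sqrt_step E x hx2 hx0 4646467881900260339 1902730277749 4884001 4646468697356133410 17094005 (by norm_num) (by norm_num [hEdef]) (by norm_num [hEdef]) (by norm_num) (by norm_num [hEdef]) (by norm_num [hEdef]) _ h54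
  have h55 : completeQuotient x 55 = (x + ((4646468697356133410:ℤ):ℝ)) / ((17094005:ℤ):ℝ) := s54.2
  have s55 := sqrt_step E x hx2 hx0 4646468697356133410 17094005 543637222214 4646468697356093660 21611482313284249 (by norm_num) (by norm_num [hEdef]) (by norm_num [hEdef]) (by norm_num) (by norm_num [hEdef]) (by norm_num [hEdef]) _ h55
  have h56 : completeQuotient x 56 = (x + ((4646468697356093660:ℤ):ℝ)) / ((21611482313284249:ℤ):ℝ) := s55.2
  have s56 := sqrt_step E x hx2 hx0 4646468697356093660 21611482313284249 430 4646468697356133410 1505 (by norm_num) (by norm_num [hEdef]) (by norm_num [hEdef]) (by norm_num) (by norm_num [hEdef]) (by norm_num [hEdef]) _ h56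
  have h57 : completeQuotient x 57 = (x + ((4646468697356133410:ℤ):ℝ)) / ((1505:ℤ):ℝ) := s56.2
  have s57 := sqrt_step E x hx2 hx0 4646468697356133410 1505 6174709232366954 4646468697356132360 6505056176298585949 (by norm_num) (by norm_num [hEdef]) (by norm_num [hEdef]) (by norm_num) (by norm_num [hEdef]) (by norm_num [hEdef]) _ h57
  have h58 : completeQuotient x 58 = (x + ((4646468697356132360:ℤ):ℝ)) / ((6505056176298585949:ℤ):ℝ) := s57.2
  have s58 := sqrt_step E x hx2 hx0 4646468697356132360 6505056176298585949 1 1858587478942453589 2787881218413680276 (by norm_num) (by norm_num [hEdef]) (by norm_num [hEdef]) (by norm_num) (by norm_num [hEdef]) (by norm_num [hEdef]) _ h58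
  have h59 : completeQuotient x 59 = (x + ((1858587478942453589:ℤ):ℝ)) / ((2787881218413680276:ℤ):ℝ) := s58.2
  have s59 := sqrt_step E x hx2 hx0 1858587478942453589 2787881218413680276 2 3717174957884906963 2787881218413679201 (by norm_num) (by norm_num [hEdef]) (by norm_num [hEdef]) (by norm_num) (by norm_num [hEdef]) (by norm_num [hEdef]) _ h59
  have h60 : completeQuotient x 60 = (x + ((3717174957884906963:ℤ):ℝ)) / ((2787881218413679201:ℤ):ℝ) := s59.2
  have s60 := sqrt_step E x hx2 hx0 3717174957884906963 2787881218413679201 3 4646468697356130640 9245 (by norm_num) (by norm_num [hEdef]) (by norm_num [hEdef]) (by norm_num) (by norm_num [hEdef]) (by norm_num [hEdef]) _ h60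
  have h61 : completeQuotient x 61 = (x + ((4646468697356130640:ℤ):ℝ)) / ((9245:ℤ):ℝ) := s60.2
  have s61 := sqrt_step E x hx2 hx0 4646468697356130640 9245 1005185223873690 4646468697356133410 3518148283557901 (by norm_num) (by norm_num [hEdef]) (by norm_num [hEdef]) (by norm_num) (by norm_num [hEdef]) (by norm_num [hEdef]) _ h61
  have h62 : completeQuotient x 62 = (x + ((4646468697356133410:ℤ):ℝ)) / ((3518148283557901:ℤ):ℝ) := s61.2
  have s62 := sqrt_step E x hx2 hx0 4646468697356133410 3518148283557901 2641 4644960919520283131 3982041264480596084 (by norm_num) (by norm_num [hEdef]) (by norm_num [hEdef]) (by norm_num) (by norm_num [hEdef]) (by norm_num [hEdef]) _ h62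
  have h63 : completeQuotient x 63 = (x + ((4644960919520283131:ℤ):ℝ)) / ((3982041264480596084:ℤ):ℝ) := s62.2
  have s63 := sqrt_step E x hx2 hx0 4644960919520283131 3982041264480596084 2 3319121609440909037 2655196768442306089 (by norm_num) (by norm_num [hEdef]) (by norm_num [hEdef]) (by norm_num) (by norm_num [hEdef]) (by norm_num [hEdef]) _ h63
  have h64 : completeQuotient x 64 = (x + ((3319121609440909037:ℤ):ℝ)) / ((2655196768442306089:ℤ):ℝ) := s63.2
  have s64 := sqrt_step E x hx2 hx0 3319121609440909037 2655196768442306089 3 4646468695886009230 5145295505 (by norm_num) (by norm_num [hEdef]) (by norm_num [hEdef]) (by norm_num) (by norm_num [hEdef]) (by norm_num [hEdef]) _ h64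
  have h65 : completeQuotient x 65 = (x + ((4646468695886009230:ℤ):ℝ)) / ((5145295505:ℤ):ℝ) := s64.2
  have s65 := sqrt_step E x hx2 hx0 4646468695886009230 5145295505 1806103728 4646468697356133410 6321363049 (by norm_num) (by norm_num [hEdef]) (by norm_num [hEdef]) (by norm_num) (by norm_num [hEdef]) (by norm_num [hEdef]) _ h65
  have h66 : completeQuotient x 66 = (x + ((4646468697356133410:ℤ):ℝ)) / ((6321363049:ℤ):ℝ) := s65.2
  have s66 := sqrt_step E x hx2 hx0 4646468697356133410 6321363049 1470084430 4646468697356093660 58441001388005 (by norm_num) (by norm_num [hEdef]) (by norm_num [hEdef]) (by norm_num) (by norm_num [hEdef]) (by norm_num [hEdef]) _ h66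
  have h67 : completeQuotient x 67 = (x + ((4646468697356093660:ℤ):ℝ)) / ((58441001388005:ℤ):ℝ) := s66.2
  have s67 := sqrt_step E x hx2 hx0 4646468697356093660 58441001388005 159014 4646468697356133410 556549 (by norm_num) (by norm_num [hEdef]) (by norm_num [hEdef]) (by norm_num) (by norm_num [hEdef]) (by norm_num [hEdef]) _ h67
  have h68 : completeQuotient x 68 = (x + ((4646468697356133410:ℤ):ℝ)) / ((556549:ℤ):ℝ) := s67.2
  have s68 := sqrt_step E x hx2 hx0 4646468697356133410 556549 16697428968001 4646468697355855139 4646468697355994276 (by norm_num) (by norm_num [hEdef]) (by norm_num [hEdef]) (by norm_num) (by norm_num [hEdef]) (by norm_num [hEdef]) _ h68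
  have h69 : completeQuotient x 69 = (x + ((4646468697355855139:ℤ):ℝ)) / ((4646468697355994276:ℤ):ℝ) := s68.2
  have s69 := sqrt_step E x hx2 hx0 4646468697355855139 4646468697355994276 2 4646468697356133413 1 (by norm_num) (by norm_num [hEdef]) (by norm_num [hEdef]) (by norm_num) (by norm_num [hEdef]) (by norm_num [hEdef]) _ h69
  have h70 : completeQuotient x 70 = (x + ((4646468697356133413:ℤ):ℝ)) / ((1:ℤ):ℝ) := s69.2
  have s70 := sqrt_step E x hx2 hx0 4646468697356133413 1 9292937394712266826 4646468697356133413 4646468697355994276 (by norm_num) (by norm_num [hEdef]) (by norm_num [hEdef]) (by norm_num) (by norm_num [hEdef]) (by norm_num [hEdef]) _ h70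
  have h71 : completeQuotient x 71 = (x + ((4646468697356133413:ℤ):ℝ)) / ((4646468697355994276:ℤ):ℝ) := s70.2
  have s71 := sqrt_step E x hx2 hx0 4646468697356133413 4646468697355994276 2 4646468697355855139 556549 (by norm_num) (by norm_num [hEdef]) (by norm_num [hEdef]) (by norm_num) (by norm_num [hEdef]) (by norm_num [hEdef]) _ h71
  have A1 : a 1 = 2 := by rw [ha]; exact s1.1
  have A2 : a 2 = 16697428968001 := by rw [ha]; exact s2.1
  have A3 : a 3 = 159014 := by rw [ha]; exact s3.1
  have A4 : a 4 = 1470084430 := by rw [ha]; exact s4.1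
  have A5 : a 5 = 1806103728 := by rw [ha]; exact s5.1
  have A6 : a 6 = 3 := by rw [ha]; exact s6.1
  have A7 : a 7 = 2 := by rw [ha]; exact s7.1
  have A8 : a 8 = 2641 := by rw [ha]; exact s8.1
  have A9 : a 9 = 1005185223873690 := by rw [ha]; exact s9.1
  have A10 : a 10 = 3 := by rw [ha]; exact s10.1
  have A11 : a 11 = 2 := by rw [ha]; exact s11.1
  have A12 : a 12 = 1 := by rw [ha]; exact s12.1
  have A13 : a 13 = 6174709232366954 := by rw [ha]; exact s13.1
  have A14 : a 14 = 430 := by rw [ha]; exact s14.1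
  have A15 : a 15 = 543637222214 := by rw [ha]; exact s15.1
  have A16 : a 16 = 4884001 := by rw [ha]; exact s16.1
  have A17 : a 17 = 2 := by rw [ha]; exact s17.1
  have A18 : a 18 = 3 := by rw [ha]; exact s18.1
  have A19 : a 19 = 976800 := by rw [ha]; exact s19.1
  have A20 : a 20 = 2718186111070 := by rw [ha]; exact s20.1
  have A21 : a 21 = 86 := by rw [ha]; exact s21.1
  have A22 : a 22 = 30873546161834773 := by rw [ha]; exact s22.1
  have A23 : a 23 = 2 := by rw [ha]; exact s23.1
  have A24 : a 24 = 5025926119368451 := by rw [ha]; exact s24.1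
  have A25 : a 25 = 528 := by rw [ha]; exact s25.1
  have A26 : a 26 = 3 := by rw [ha]; exact s26.1
  have A27 : a 27 = 2 := by rw [ha]; exact s27.1
  have A28 : a 28 = 9030518641 := by rw [ha]; exact s28.1
  have A29 : a 29 = 294016886 := by rw [ha]; exact s29.1
  have A30 : a 30 = 795070 := by rw [ha]; exact s30.1
  have A31 : a 31 = 3339485793600 := by rw [ha]; exact s31.1
  have A32 : a 32 = 3 := by rw [ha]; exact s32.1
  have A33 : a 33 = 2 := by rw [ha]; exact s33.1
  have A34 : a 34 = 1 := by rw [ha]; exact s34.1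
  have A35 : a 35 = 1858587478942453364 := by rw [ha]; exact s35.1
  have A36 : a 36 = 1 := by rw [ha]; exact s36.1
  have A37 : a 37 = 2 := by rw [ha]; exact s37.1
  have A38 : a 38 = 3 := by rw [ha]; exact s38.1
  have A39 : a 39 = 3339485793600 := by rw [ha]; exact s39.1
  have A40 : a 40 = 795070 := by rw [ha]; exact s40.1
  have A41 : a 41 = 294016886 := by rw [ha]; exact s41.1
  have A42 : a 42 = 9030518641 := by rw [ha]; exact s42.1
  have A43 : a 43 = 2 := by rw [ha]; exact s43.1
  have A44 : a 44 = 3 := by rw [ha]; exact s44.1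
  have A45 : a 45 = 528 := by rw [ha]; exact s45.1
  have A46 : a 46 = 5025926119368451 := by rw [ha]; exact s46.1
  have A47 : a 47 = 2 := by rw [ha]; exact s47.1
  have A48 : a 48 = 30873546161834773 := by rw [ha]; exact s48.1
  have A49 : a 49 = 86 := by rw [ha]; exact s49.1
  have A50 : a 50 = 2718186111070 := by rw [ha]; exact s50.1
  have A51 : a 51 = 976800 := by rw [ha]; exact s51.1
  have A52 : a 52 = 3 := by rw [ha]; exact s52.1
  have A53 : a 53 = 2 := by rw [ha]; exact s53.1
  have A54 : a 54 = 4884001 := by rw [ha]; exact s54.1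
  have A55 : a 55 = 543637222214 := by rw [ha]; exact s55.1
  have A56 : a 56 = 430 := by rw [ha]; exact s56.1
  have A57 : a 57 = 6174709232366954 := by rw [ha]; exact s57.1
  have A58 : a 58 = 1 := by rw [ha]; exact s58.1
  have A59 : a 59 = 2 := by rw [ha]; exact s59.1
  have A60 : a 60 = 3 := by rw [ha]; exact s60.1
  have A61 : a 61 = 1005185223873690 := by rw [ha]; exact s61.1
  have A62 : a 62 = 2641 := by rw [ha]; exact s62.1
  have A63 : a 63 = 2 := by rw [ha]; exact s63.1
  have A64 : a 64 = 3 := by rw [ha]; exact s64.1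
  have A65 : a 65 = 1806103728 := by rw [ha]; exact s65.1
  have A66 : a 66 = 1470084430 := by rw [ha]; exact s66.1
  have A67 : a 67 = 159014 := by rw [ha]; exact s67.1
  have A68 : a 68 = 16697428968001 := by rw [ha]; exact s68.1
  have A69 : a 69 = 2 := by rw [ha]; exact s69.1
  have A70 : a 70 = 9292937394712266826 := by rw [ha]; exact s70.1
  have A71 : a 71 = 2 := by rw [ha]; exact s71.1
  have hfloor : ⌊x⌋ = 4646468697356133413 := by
    have h := s0.1
    rwa [show completeQuotient x 0 = x from rfl] at h
  have hc : completeQuotient x 71 = completeQuotient x 1 := h71.trans h1.symm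
  have shift : ∀ j, completeQuotient x (71 + j) = completeQuotient x (1 + j) := by
    intro j
    induction j with
    | zero => exact hc
    | succ n ih =>
      have e1 : completeQuotient x (71 + (n+1)) = 1 / (completeQuotient x (71+n) - ((⌊completeQuotient x (71+n)⌋ : ℤ) : ℝ)) := rfl
      have e2 : completeQuotient x (1 + (n+1)) = 1 / (completeQuotient x (1+n) - ((⌊completeQuotient x (1+n)⌋ : ℤ) : ℝ)) := rfl
      rw [e1, e2, ih]
  refine ⟨hnsq, hfloor, ?_, ?_⟩
  · intro k hk
    obtain ⟨j, rfl⟩ : ∃ j, k = 1 + j := ⟨k - 1, by omega⟩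
    rw [ha, ha, show 1 + j + 70 = 71 + j from by omega, shift j]
  · intro p hp hper
    by_contra hcon
    push_neg at hcon
    have hcon' : p ≤ 69 := by omega
    interval_cases p
    · have hw := hper 1 (by norm_num)
      rw [show (1 + 1 : ℕ) = 2 from by norm_num, A2, A1] at hw
      exact absurd hw (by norm_num)
    · have hw := hper 1 (by norm_num)
      rw [show (1 + 2 : ℕ) = 3 from by norm_num, A3, A1] at hw
      exact absurd hw (by norm_num)
    · have hw := hper 1 (by norm_num)
      rw [show (1 + 3 : ℕ) = 4 from by norm_num, A4, A1] at hw
      exact absurd hw (by norm_num)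
    · have hw := hper 1 (by norm_num)
      rw [show (1 + 4 : ℕ) = 5 from by norm_num, A5, A1] at hw
      exact absurd hw (by norm_num)
    · have hw := hper 1 (by norm_num)
      rw [show (1 + 5 : ℕ) = 6 from by norm_num, A6, A1] at hw
      exact absurd hw (by norm_num)
    · have hw := hper 2 (by norm_num)
      rw [show (2 + 6 : ℕ) = 8 from by norm_num, A8, A2] at hw
      exact absurd hw (by norm_num)
    · have hw := hper 1 (by norm_num)
      rw [show (1 + 7 : ℕ) = 8 from by norm_num, A8, A1] at hw
      exact absurd hw (by norm_num)
    · have hw := hper 1 (by norm_num)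
      rw [show (1 + 8 : ℕ) = 9 from by norm_num, A9, A1] at hw
      exact absurd hw (by norm_num)
    · have hw := hper 1 (by norm_num)
      rw [show (1 + 9 : ℕ) = 10 from by norm_num, A10, A1] at hw
      exact absurd hw (by norm_num)
    · have hw := hper 2 (by norm_num)
      rw [show (2 + 10 : ℕ) = 12 from by norm_num, A12, A2] at hw
      exact absurd hw (by norm_num)
    · have hw := hper 1 (by norm_num)
      rw [show (1 + 11 : ℕ) = 12 from by norm_num, A12, A1] at hw
      exact absurd hw (by norm_num)
    · have hw := hper 1 (by norm_num)
      rw [show (1 + 12 : ℕ) = 13 from by norm_num, A13, A1] at hw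
      exact absurd hw (by norm_num)
    · have hw := hper 1 (by norm_num)
      rw [show (1 + 13 : ℕ) = 14 from by norm_num, A14, A1] at hw
      exact absurd hw (by norm_num)
    · have hw := hper 1 (by norm_num)
      rw [show (1 + 14 : ℕ) = 15 from by norm_num, A15, A1] at hw
      exact absurd hw (by norm_num)
    · have hw := hper 1 (by norm_num)
      rw [show (1 + 15 : ℕ) = 16 from by norm_num, A16, A1] at hw
      exact absurd hw (by norm_num)
    · have hw := hper 2 (by norm_num)
      rw [show (2 + 16 : ℕ) = 18 from by norm_num, A18, A2] at hw
      exact absurd hw (by norm_num)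
    · have hw := hper 1 (by norm_num)
      rw [show (1 + 17 : ℕ) = 18 from by norm_num, A18, A1] at hw
      exact absurd hw (by norm_num)
    · have hw := hper 1 (by norm_num)
      rw [show (1 + 18 : ℕ) = 19 from by norm_num, A19, A1] at hw
      exact absurd hw (by norm_num)
    · have hw := hper 1 (by norm_num)
      rw [show (1 + 19 : ℕ) = 20 from by norm_num, A20, A1] at hw
      exact absurd hw (by norm_num)
    · have hw := hper 1 (by norm_num)
      rw [show (1 + 20 : ℕ) = 21 from by norm_num, A21, A1] at hw
      exact absurd hw (by norm_num)
    · have hw := hper 1 (by norm_num)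
      rw [show (1 + 21 : ℕ) = 22 from by norm_num, A22, A1] at hw
      exact absurd hw (by norm_num)
    · have hw := hper 2 (by norm_num)
      rw [show (2 + 22 : ℕ) = 24 from by norm_num, A24, A2] at hw
      exact absurd hw (by norm_num)
    · have hw := hper 1 (by norm_num)
      rw [show (1 + 23 : ℕ) = 24 from by norm_num, A24, A1] at hw
      exact absurd hw (by norm_num)
    · have hw := hper 1 (by norm_num)
      rw [show (1 + 24 : ℕ) = 25 from by norm_num, A25, A1] at hw
      exact absurd hw (by norm_num)
    · have hw := hper 1 (by norm_num)
      rw [show (1 + 25 : ℕ) = 26 from by norm_num, A26, A1] at hw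
      exact absurd hw (by norm_num)
    · have hw := hper 2 (by norm_num)
      rw [show (2 + 26 : ℕ) = 28 from by norm_num, A28, A2] at hw
      exact absurd hw (by norm_num)
    · have hw := hper 1 (by norm_num)
      rw [show (1 + 27 : ℕ) = 28 from by norm_num, A28, A1] at hw
      exact absurd hw (by norm_num)
    · have hw := hper 1 (by norm_num)
      rw [show (1 + 28 : ℕ) = 29 from by norm_num, A29, A1] at hw
      exact absurd hw (by norm_num)
    · have hw := hper 1 (by norm_num)
      rw [show (1 + 29 : ℕ) = 30 from by norm_num, A30, A1] at hw
      exact absurd hw (by norm_num)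
    · have hw := hper 1 (by norm_num)
      rw [show (1 + 30 : ℕ) = 31 from by norm_num, A31, A1] at hw
      exact absurd hw (by norm_num)
    · have hw := hper 1 (by norm_num)
      rw [show (1 + 31 : ℕ) = 32 from by norm_num, A32, A1] at hw
      exact absurd hw (by norm_num)
    · have hw := hper 2 (by norm_num)
      rw [show (2 + 32 : ℕ) = 34 from by norm_num, A34, A2] at hw
      exact absurd hw (by norm_num)
    · have hw := hper 1 (by norm_num)
      rw [show (1 + 33 : ℕ) = 34 from by norm_num, A34, A1] at hw
      exact absurd hw (by norm_num)
    · have hw := hper 1 (by norm_num)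
      rw [show (1 + 34 : ℕ) = 35 from by norm_num, A35, A1] at hw
      exact absurd hw (by norm_num)
    · have hw := hper 1 (by norm_num)
      rw [show (1 + 35 : ℕ) = 36 from by norm_num, A36, A1] at hw
      exact absurd hw (by norm_num)
    · have hw := hper 2 (by norm_num)
      rw [show (2 + 36 : ℕ) = 38 from by norm_num, A38, A2] at hw
      exact absurd hw (by norm_num)
    · have hw := hper 1 (by norm_num)
      rw [show (1 + 37 : ℕ) = 38 from by norm_num, A38, A1] at hw
      exact absurd hw (by norm_num)
    · have hw := hper 1 (by norm_num)
      rw [show (1 + 38 : ℕ) = 39 from by norm_num, A39, A1] at hw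
      exact absurd hw (by norm_num)
    · have hw := hper 1 (by norm_num)
      rw [show (1 + 39 : ℕ) = 40 from by norm_num, A40, A1] at hw
      exact absurd hw (by norm_num)
    · have hw := hper 1 (by norm_num)
      rw [show (1 + 40 : ℕ) = 41 from by norm_num, A41, A1] at hw
      exact absurd hw (by norm_num)
    · have hw := hper 1 (by norm_num)
      rw [show (1 + 41 : ℕ) = 42 from by norm_num, A42, A1] at hw
      exact absurd hw (by norm_num)
    · have hw := hper 2 (by norm_num)
      rw [show (2 + 42 : ℕ) = 44 from by norm_num, A44, A2] at hw
      exact absurd hw (by norm_num)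
    · have hw := hper 1 (by norm_num)
      rw [show (1 + 43 : ℕ) = 44 from by norm_num, A44, A1] at hw
      exact absurd hw (by norm_num)
    · have hw := hper 1 (by norm_num)
      rw [show (1 + 44 : ℕ) = 45 from by norm_num, A45, A1] at hw
      exact absurd hw (by norm_num)
    · have hw := hper 1 (by norm_num)
      rw [show (1 + 45 : ℕ) = 46 from by norm_num, A46, A1] at hw
      exact absurd hw (by norm_num)
    · have hw := hper 2 (by norm_num)
      rw [show (2 + 46 : ℕ) = 48 from by norm_num, A48, A2] at hw
      exact absurd hw (by norm_num)
    · have hw := hper 1 (by norm_num)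
      rw [show (1 + 47 : ℕ) = 48 from by norm_num, A48, A1] at hw
      exact absurd hw (by norm_num)
    · have hw := hper 1 (by norm_num)
      rw [show (1 + 48 : ℕ) = 49 from by norm_num, A49, A1] at hw
      exact absurd hw (by norm_num)
    · have hw := hper 1 (by norm_num)
      rw [show (1 + 49 : ℕ) = 50 from by norm_num, A50, A1] at hw
      exact absurd hw (by norm_num)
    · have hw := hper 1 (by norm_num)
      rw [show (1 + 50 : ℕ) = 51 from by norm_num, A51, A1] at hw
      exact absurd hw (by norm_num)
    · have hw := hper 1 (by norm_num)
      rw [show (1 + 51 : ℕ) = 52 from by norm_num, A52, A1] at hw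
      exact absurd hw (by norm_num)
    · have hw := hper 2 (by norm_num)
      rw [show (2 + 52 : ℕ) = 54 from by norm_num, A54, A2] at hw
      exact absurd hw (by norm_num)
    · have hw := hper 1 (by norm_num)
      rw [show (1 + 53 : ℕ) = 54 from by norm_num, A54, A1] at hw
      exact absurd hw (by norm_num)
    · have hw := hper 1 (by norm_num)
      rw [show (1 + 54 : ℕ) = 55 from by norm_num, A55, A1] at hw
      exact absurd hw (by norm_num)
    · have hw := hper 1 (by norm_num)
      rw [show (1 + 55 : ℕ) = 56 from by norm_num, A56, A1] at hw
      exact absurd hw (by norm_num)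
    · have hw := hper 1 (by norm_num)
      rw [show (1 + 56 : ℕ) = 57 from by norm_num, A57, A1] at hw
      exact absurd hw (by norm_num)
    · have hw := hper 1 (by norm_num)
      rw [show (1 + 57 : ℕ) = 58 from by norm_num, A58, A1] at hw
      exact absurd hw (by norm_num)
    · have hw := hper 2 (by norm_num)
      rw [show (2 + 58 : ℕ) = 60 from by norm_num, A60, A2] at hw
      exact absurd hw (by norm_num)
    · have hw := hper 1 (by norm_num)
      rw [show (1 + 59 : ℕ) = 60 from by norm_num, A60, A1] at hw
      exact absurd hw (by norm_num)
    · have hw := hper 1 (by norm_num)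
      rw [show (1 + 60 : ℕ) = 61 from by norm_num, A61, A1] at hw
      exact absurd hw (by norm_num)
    · have hw := hper 1 (by norm_num)
      rw [show (1 + 61 : ℕ) = 62 from by norm_num, A62, A1] at hw
      exact absurd hw (by norm_num)
    · have hw := hper 2 (by norm_num)
      rw [show (2 + 62 : ℕ) = 64 from by norm_num, A64, A2] at hw
      exact absurd hw (by norm_num)
    · have hw := hper 1 (by norm_num)
      rw [show (1 + 63 : ℕ) = 64 from by norm_num, A64, A1] at hw
      exact absurd hw (by norm_num)
    · have hw := hper 1 (by norm_num)
      rw [show (1 + 64 : ℕ) = 65 from by norm_num, A65, A1] at hw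
      exact absurd hw (by norm_num)
    · have hw := hper 1 (by norm_num)
      rw [show (1 + 65 : ℕ) = 66 from by norm_num, A66, A1] at hw
      exact absurd hw (by norm_num)
    · have hw := hper 1 (by norm_num)
      rw [show (1 + 66 : ℕ) = 67 from by norm_num, A67, A1] at hw
      exact absurd hw (by norm_num)
    · have hw := hper 1 (by norm_num)
      rw [show (1 + 67 : ℕ) = 68 from by norm_num, A68, A1] at hw
      exact absurd hw (by norm_num)
    · have hw := hper 2 (by norm_num)
      rw [show (2 + 68 : ℕ) = 70 from by norm_num, A70, A2] at hw
      exact absurd hw (by norm_num)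
    · have hw := hper 1 (by norm_num)
      rw [show (1 + 69 : ℕ) = 70 from by norm_num, A70, A1] at hw
      exact absurd hw (by norm_num)
end

section
/- Let D = (77·131^6 + 14)^2 − 644·131^6. Then D ≡ 1 (mod 4), D is not a perfect square, and the sequence (a_k)_{k≥1} of partial quotients of the simple continued fraction expansion of (1 + √D)/2 is periodic with minimal period 56, i.e. a_{k+56} = a_k for all k ≥ 1 and no smaller positive integer has this property. -/
namespace S18

def N : ℤ := 151438743716659750316182424837
def s : ℤ := 389151312109646

noncomputable def surd (P Q : ℤ) : ℝ := ((P : ℝ) + Real.sqrt (N : ℝ)) / Q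

lemma sqrt_lb : (s : ℝ) < Real.sqrt (N : ℝ) := by
  rw [show ((s:ℤ):ℝ) = ((389151312109646:ℕ):ℝ) by norm_num [s]]
  rw [Real.lt_sqrt (by positivity)]
  norm_num [N]

lemma sqrt_ub : Real.sqrt (N : ℝ) < (s : ℝ) + 1 := by
  rw [show ((s:ℤ):ℝ) + 1 = ((389151312109647:ℕ):ℝ) by norm_num [s]]
  rw [show ((N:ℤ):ℝ) = ((151438743716659750316182424837:ℕ):ℝ) by norm_num [N]]
  rw [Real.sqrt_lt' (by positivity)]
  norm_num

lemma step (P Q a P' Q' : ℤ) (hQ : 0 < Q) (hQ' : 0 < Q')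
    (hP' : a * Q - P = P') (hQQ' : Q * Q' = N - P' ^ 2)
    (h1 : P' ≤ s) (h2 : s < P' + Q) :
    ⌊surd P Q⌋ = a ∧ 1 / (surd P Q - (a : ℝ)) = surd P' Q' := by
  have hQR : (0:ℝ) < (Q:ℝ) := by exact_mod_cast hQ
  have hQ'R : (0:ℝ) < (Q':ℝ) := by exact_mod_cast hQ'
  have hlb := sqrt_lb
  have hub := sqrt_ub
  have hP'R : (P':ℝ) < Real.sqrt (N:ℝ) := by
    have : (P':ℝ) ≤ (s:ℝ) := by exact_mod_cast h1
    linarith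
  have hPQ : Real.sqrt (N:ℝ) < (P':ℝ) + (Q:ℝ) := by
    have : (s:ℝ) + 1 ≤ (P':ℝ) + (Q:ℝ) := by exact_mod_cast h2
    linarith
  have hsub : surd P Q - (a : ℝ) = (Real.sqrt (N:ℝ) - (P':ℝ)) / Q := by
    unfold surd
    field_simp
    have : (P':ℝ) = (a:ℝ) * (Q:ℝ) - (P:ℝ) := by exact_mod_cast hP'.symm
    rw [this]; ring
  have hpos : (0:ℝ) < (Real.sqrt (N:ℝ) - (P':ℝ)) / Q := by
    apply div_pos <;> linarith
  have hlt1 : (Real.sqrt (N:ℝ) - (P':ℝ)) / Q < 1 := by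
    rw [div_lt_one hQR]; linarith
  constructor
  · rw [Int.floor_eq_iff]
    constructor <;> rw [show surd P Q = (surd P Q - (a:ℝ)) + (a:ℝ) by ring, hsub] <;> linarith
  · rw [hsub]
    have hsq : Real.sqrt (N:ℝ) ^ 2 = (N:ℝ) := Real.sq_sqrt (by norm_num [N])
    have hne : Real.sqrt (N:ℝ) - (P':ℝ) ≠ 0 := by linarith
    unfold surd
    rw [one_div_div, div_eq_div_iff hne hQ'R.ne']
    have hcast : (Q:ℝ) * (Q':ℝ) = (N:ℝ) - (P':ℝ)^2 := by exact_mod_cast hQQ'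
    nlinarith [hcast, hsq]

lemma cq_step (x : ℝ) (k : ℕ) (P Q a P' Q' : ℤ) (h : completeQuotient x k = surd P Q)
    (hQ : 0 < Q) (hQ' : 0 < Q') (hP' : a * Q - P = P') (hQQ' : Q * Q' = N - P' ^ 2)
    (h1 : P' ≤ s) (h2 : s < P' + Q) :
    ⌊completeQuotient x k⌋ = a ∧ completeQuotient x (k + 1) = surd P' Q' := by
  obtain ⟨hf, hn⟩ := step P Q a P' Q' hQ hQ' hP' hQQ' h1 h2
  have hfl : ⌊completeQuotient x k⌋ = a := by rw [h]; exact hf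
  refine ⟨hfl, ?_⟩
  show 1 / (completeQuotient x k - (⌊completeQuotient x k⌋ : ℝ)) = _
  rw [hfl, h]; exact hn

lemma cq_shift (x : ℝ) (h : completeQuotient x 57 = completeQuotient x 1) :
    ∀ j, completeQuotient x (57 + j) = completeQuotient x (1 + j) := by
  intro j
  induction j with
  | zero => simpa using h
  | succ n ih =>
    show 1 / (completeQuotient x (57 + n) - (⌊completeQuotient x (57 + n)⌋ : ℝ)) =
      1 / (completeQuotient x (1 + n) - (⌊completeQuotient x (1 + n)⌋ : ℝ))
    rw [ih]

end S18

open S18 in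
/-- For `D = (77·131^6 + 14)^2 − 644·131^6` we have `D ≡ 1 (mod 4)`, `D` is not
a perfect square, and the partial quotients `a_k = ⌊x_k⌋` of the simple
continued fraction of `(1 + √D)/2` are periodic for `k ≥ 1` with minimal
period 56. -/
theorem stmt_18 (D : ℤ) (hD : D = (77 * 131 ^ 6 + 14) ^ 2 - 644 * 131 ^ 6)
    (a : ℕ → ℤ)
    (ha : ∀ k, a k = ⌊completeQuotient ((1 + Real.sqrt (D : ℝ)) / 2) k⌋) :
    D % 4 = 1 ∧
    ¬ IsSquare D ∧
    (∀ k, 1 ≤ k → a (k + 56) = a k) ∧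
    (∀ p : ℕ, 0 < p → (∀ k, 1 ≤ k → a (k + p) = a k) → 56 ≤ p) := by
  subst hD
  have hN : ((77 * 131 ^ 6 + 14) ^ 2 - 644 * 131 ^ 6 : ℤ) = N := by norm_num [N]
  rw [hN] at ha ⊢
  set x : ℝ := (1 + Real.sqrt ((N : ℤ) : ℝ)) / 2 with hxdef
  have e0 : completeQuotient x 0 = surd 1 2 := by
    show x = surd 1 2
    rw [hxdef]; unfold surd; norm_num
  have h0 := cq_step x 0 1 2 194575656054823 389151312109645 707547840199406 e0 (by norm_num) (by norm_num) (by norm_num) (by norm_num [N]) (by norm_num [s]) (by norm_num [s])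
  have f0 : ⌊completeQuotient x 0⌋ = 194575656054823 := h0.1
  have e1 : completeQuotient x 1 = surd 389151312109645 707547840199406 := h0.2
  have h1 := cq_step x 1 389151312109645 707547840199406 1 318396528089761 70754784019886 e1 (by norm_num) (by norm_num) (by norm_num) (by norm_num [N]) (by norm_num [s]) (by norm_num [s])
  have f1 : ⌊completeQuotient x 1⌋ = 1 := h1.1
  have e2 : completeQuotient x 2 = surd 318396528089761 70754784019886 := h1.2
  have h2 := cq_step x 2 318396528089761 70754784019886 10 389151312109099 6026 e2 (by norm_num) (by norm_num) (by norm_num) (by norm_num [N]) (by norm_num [s]) (by norm_num [s])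
  have f2 : ⌊completeQuotient x 2⌋ = 10 := h2.1
  have e3 : completeQuotient x 3 = surd 389151312109099 6026 := h2.2
  have h3 := cq_step x 3 389151312109099 6026 129157421874 389151312103625 777762511358162 e3 (by norm_num) (by norm_num) (by norm_num) (by norm_num [N]) (by norm_num [s]) (by norm_num [s])
  have f3 : ⌊completeQuotient x 3⌋ = 129157421874 := h3.1
  have e4 : completeQuotient x 4 = surd 389151312103625 777762511358162 := h3.2
  have h4 := cq_step x 4 389151312103625 777762511358162 1 388611199254537 540112855114 e4 (by norm_num) (by norm_num) (by norm_num) (by norm_num [N]) (by norm_num [s]) (by norm_num [s])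
  have f4 : ⌊completeQuotient x 4⌋ = 1 := h4.1
  have e5 : completeQuotient x 5 = surd 388611199254537 540112855114 := h4.2
  have h5 := cq_step x 5 388611199254537 540112855114 1440 389151312109623 34322 e5 (by norm_num) (by norm_num) (by norm_num) (by norm_num [N]) (by norm_num [s]) (by norm_num [s])
  have f5 : ⌊completeQuotient x 5⌋ = 1440 := h5.1
  have e6 : completeQuotient x 6 = surd 389151312109623 34322 := h5.2
  have h6 := cq_step x 6 389151312109623 34322 22676493916 389151312075329 778207795210418 e6 (by norm_num) (by norm_num) (by norm_num) (by norm_num [N]) (by norm_num [s]) (by norm_num [s])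
  have f6 : ⌊completeQuotient x 6⌋ = 22676493916 := h6.1
  have e7 : completeQuotient x 7 = surd 389151312075329 778207795210418 := h6.2
  have h7 := cq_step x 7 389151312075329 778207795210418 1 389056483135089 94828974562 e7 (by norm_num) (by norm_num) (by norm_num) (by norm_num [N]) (by norm_num [s]) (by norm_num [s])
  have f7 : ⌊completeQuotient x 7⌋ = 1 := h7.1
  have e8 : completeQuotient x 8 = surd 389056483135089 94828974562 := h7.2
  have h8 := cq_step x 8 389056483135089 94828974562 8206 389110082120683 338374519426054 e8 (by norm_num) (by norm_num) (by norm_num) (by norm_num [N]) (by norm_num [s]) (by norm_num [s])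
  have f8 : ⌊completeQuotient x 8⌋ = 8206 := h8.1
  have e9 : completeQuotient x 9 = surd 389110082120683 338374519426054 := h8.2
  have h9 := cq_step x 9 389110082120683 338374519426054 2 287638956731425 203037079753078 e9 (by norm_num) (by norm_num) (by norm_num) (by norm_num [N]) (by norm_num [s]) (by norm_num [s])
  have f9 : ⌊completeQuotient x 9⌋ = 2 := h9.1
  have e10 : completeQuotient x 10 = surd 287638956731425 203037079753078 := h9.2
  have h10 := cq_step x 10 287638956731425 203037079753078 3 321472282527809 236874542036902 e10 (by norm_num) (by norm_num) (by norm_num) (by norm_num [N]) (by norm_num [s]) (by norm_num [s])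
  have f10 : ⌊completeQuotient x 10⌋ = 3 := h10.1
  have e11 : completeQuotient x 11 = surd 321472282527809 236874542036902 := h10.2
  have h11 := cq_step x 11 321472282527809 236874542036902 2 152276801545995 541428041716706 e11 (by norm_num) (by norm_num) (by norm_num) (by norm_num [N]) (by norm_num [s]) (by norm_num [s])
  have f11 : ⌊completeQuotient x 11⌋ = 2 := h11.1
  have e12 : completeQuotient x 12 = surd 152276801545995 541428041716706 := h11.2
  have h12 := cq_step x 12 152276801545995 541428041716706 1 389151240170711 103412186 e12 (by norm_num) (by norm_num) (by norm_num) (by norm_num [N]) (by norm_num [s]) (by norm_num [s])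
  have f12 : ⌊completeQuotient x 12⌋ = 1 := h12.1
  have e13 : completeQuotient x 13 = surd 389151240170711 103412186 := h12.2
  have h13 := cq_step x 13 389151240170711 103412186 7526216 389151208697465 778302489333842 e13 (by norm_num) (by norm_num) (by norm_num) (by norm_num [N]) (by norm_num [s]) (by norm_num [s])
  have f13 : ⌊completeQuotient x 13⌋ = 7526216 := h13.1
  have e14 : completeQuotient x 14 = surd 389151208697465 778302489333842 := h13.2
  have h14 := cq_step x 14 389151208697465 778302489333842 1 389151280636377 31473274 e14 (by norm_num) (by norm_num) (by norm_num) (by norm_num [N]) (by norm_num [s]) (by norm_num [s])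
  have f14 : ⌊completeQuotient x 14⌋ = 1 := h14.1
  have e15 : completeQuotient x 15 = surd 389151280636377 31473274 := h14.2
  have h15 := cq_step x 15 389151280636377 31473274 24729000 389151312109623 588999842 e15 (by norm_num) (by norm_num) (by norm_num) (by norm_num [N]) (by norm_num [s]) (by norm_num [s])
  have f15 : ⌊completeQuotient x 15⌋ = 24729000 := h15.1
  have e16 : completeQuotient x 16 = surd 389151312109623 588999842 := h15.2
  have h16 := cq_step x 16 389151312109623 588999842 1321396 389150723109809 778302029693618 e16 (by norm_num) (by norm_num) (by norm_num) (by norm_num [N]) (by norm_num [s]) (by norm_num [s])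
  have f16 : ⌊completeQuotient x 16⌋ = 1321396 := h16.1
  have e17 : completeQuotient x 17 = surd 389150723109809 778302029693618 := h16.2
  have h17 := cq_step x 17 389150723109809 778302029693618 1 389151306583809 5525842 e17 (by norm_num) (by norm_num) (by norm_num) (by norm_num [N]) (by norm_num [s]) (by norm_num [s])
  have f17 : ⌊completeQuotient x 17⌋ = 1 := h17.1
  have e18 : completeQuotient x 18 = surd 389151306583809 5525842 := h17.2
  have h18 := cq_step x 18 389151306583809 5525842 140847787 389151310427845 236878065945286 e18 (by norm_num) (by norm_num) (by norm_num) (by norm_num [N]) (by norm_num [s]) (by norm_num [s])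
  have f18 : ⌊completeQuotient x 18⌋ = 140847787 := h18.1
  have e19 : completeQuotient x 19 = surd 389151310427845 236878065945286 := h18.2
  have h19 := cq_step x 19 389151310427845 236878065945286 3 321482887408013 203005274585338 e19 (by norm_num) (by norm_num) (by norm_num) (by norm_num [N]) (by norm_num [s]) (by norm_num [s])
  have f19 : ⌊completeQuotient x 19⌋ = 3 := h19.1
  have e20 : completeQuotient x 20 = surd 321482887408013 203005274585338 := h19.2
  have h20 := cq_step x 20 321482887408013 203005274585338 3 287532936348001 338727919125322 e20 (by norm_num) (by norm_num) (by norm_num) (by norm_num [N]) (by norm_num [s]) (by norm_num [s])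
  have f20 : ⌊completeQuotient x 20⌋ = 3 := h20.1
  have e21 : completeQuotient x 21 = surd 287532936348001 338727919125322 := h20.2
  have h21 := cq_step x 21 287532936348001 338727919125322 1 51194982777321 439343228156018 e21 (by norm_num) (by norm_num) (by norm_num) (by norm_num [N]) (by norm_num [s]) (by norm_num [s])
  have f21 : ⌊completeQuotient x 21⌋ = 1 := h21.1
  have e22 : completeQuotient x 22 = surd 51194982777321 439343228156018 := h21.2
  have h22 := cq_step x 22 51194982777321 439343228156018 1 388148245378697 1774656523946 e22 (by norm_num) (by norm_num) (by norm_num) (by norm_num [N]) (by norm_num [s]) (by norm_num [s])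
  have f22 : ⌊completeQuotient x 22⌋ = 1 := h22.1
  have e23 : completeQuotient x 23 = surd 388148245378697 1774656523946 := h22.2
  have h23 := cq_step x 23 388148245378697 1774656523946 437 387376655585705 776527967693522 e23 (by norm_num) (by norm_num) (by norm_num) (by norm_num [N]) (by norm_num [s]) (by norm_num [s])
  have f23 : ⌊completeQuotient x 23⌋ = 437 := h23.1
  have e24 : completeQuotient x 24 = surd 387376655585705 776527967693522 := h23.2
  have h24 := cq_step x 24 387376655585705 776527967693522 1 389151312107817 1834 e24 (by norm_num) (by norm_num) (by norm_num) (by norm_num [N]) (by norm_num [s]) (by norm_num [s])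
  have f24 : ⌊completeQuotient x 24⌋ = 1 := h24.1
  have e25 : completeQuotient x 25 = surd 389151312107817 1834 := h24.2
  have h25 := cq_step x 25 389151312107817 1834 424374386160 389151312109623 10107826288562 e25 (by norm_num) (by norm_num) (by norm_num) (by norm_num [N]) (by norm_num [s]) (by norm_num [s])
  have f25 : ⌊completeQuotient x 25⌋ = 424374386160 := h25.1
  have e26 : completeQuotient x 26 = surd 389151312109623 10107826288562 := h25.2
  have h26 := cq_step x 26 389151312109623 10107826288562 76 379043485821089 768194797930418 e26 (by norm_num) (by norm_num) (by norm_num) (by norm_num [N]) (by norm_num [s]) (by norm_num [s])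
  have f26 : ⌊completeQuotient x 26⌋ = 76 := h26.1
  have e27 : completeQuotient x 27 = surd 379043485821089 768194797930418 := h26.2
  have h27 := cq_step x 27 379043485821089 768194797930418 1 389151312109329 322 e27 (by norm_num) (by norm_num) (by norm_num) (by norm_num [N]) (by norm_num [s]) (by norm_num [s])
  have f27 : ⌊completeQuotient x 27⌋ = 1 := h27.1
  have e28 : completeQuotient x 28 = surd 389151312109329 322 := h27.2
  have h28 := cq_step x 28 389151312109329 322 2417088895089 389151312109329 768194797930418 e28 (by norm_num) (by norm_num) (by norm_num) (by norm_num [N]) (by norm_num [s]) (by norm_num [s])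
  have f28 : ⌊completeQuotient x 28⌋ = 2417088895089 := h28.1
  have e29 : completeQuotient x 29 = surd 389151312109329 768194797930418 := h28.2
  have h29 := cq_step x 29 389151312109329 768194797930418 1 379043485821089 10107826288562 e29 (by norm_num) (by norm_num) (by norm_num) (by norm_num [N]) (by norm_num [s]) (by norm_num [s])
  have f29 : ⌊completeQuotient x 29⌋ = 1 := h29.1
  have e30 : completeQuotient x 30 = surd 379043485821089 10107826288562 := h29.2
  have h30 := cq_step x 30 379043485821089 10107826288562 76 389151312109623 1834 e30 (by norm_num) (by norm_num) (by norm_num) (by norm_num [N]) (by norm_num [s]) (by norm_num [s])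
  have f30 : ⌊completeQuotient x 30⌋ = 76 := h30.1
  have e31 : completeQuotient x 31 = surd 389151312109623 1834 := h30.2
  have h31 := cq_step x 31 389151312109623 1834 424374386160 389151312107817 776527967693522 e31 (by norm_num) (by norm_num) (by norm_num) (by norm_num [N]) (by norm_num [s]) (by norm_num [s])
  have f31 : ⌊completeQuotient x 31⌋ = 424374386160 := h31.1
  have e32 : completeQuotient x 32 = surd 389151312107817 776527967693522 := h31.2
  have h32 := cq_step x 32 389151312107817 776527967693522 1 387376655585705 1774656523946 e32 (by norm_num) (by norm_num) (by norm_num) (by norm_num [N]) (by norm_num [s]) (by norm_num [s])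
  have f32 : ⌊completeQuotient x 32⌋ = 1 := h32.1
  have e33 : completeQuotient x 33 = surd 387376655585705 1774656523946 := h32.2
  have h33 := cq_step x 33 387376655585705 1774656523946 437 388148245378697 439343228156018 e33 (by norm_num) (by norm_num) (by norm_num) (by norm_num [N]) (by norm_num [s]) (by norm_num [s])
  have f33 : ⌊completeQuotient x 33⌋ = 437 := h33.1
  have e34 : completeQuotient x 34 = surd 388148245378697 439343228156018 := h33.2
  have h34 := cq_step x 34 388148245378697 439343228156018 1 51194982777321 338727919125322 e34 (by norm_num) (by norm_num) (by norm_num) (by norm_num [N]) (by norm_num [s]) (by norm_num [s])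
  have f34 : ⌊completeQuotient x 34⌋ = 1 := h34.1
  have e35 : completeQuotient x 35 = surd 51194982777321 338727919125322 := h34.2
  have h35 := cq_step x 35 51194982777321 338727919125322 1 287532936348001 203005274585338 e35 (by norm_num) (by norm_num) (by norm_num) (by norm_num [N]) (by norm_num [s]) (by norm_num [s])
  have f35 : ⌊completeQuotient x 35⌋ = 1 := h35.1
  have e36 : completeQuotient x 36 = surd 287532936348001 203005274585338 := h35.2
  have h36 := cq_step x 36 287532936348001 203005274585338 3 321482887408013 236878065945286 e36 (by norm_num) (by norm_num) (by norm_num) (by norm_num [N]) (by norm_num [s]) (by norm_num [s])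
  have f36 : ⌊completeQuotient x 36⌋ = 3 := h36.1
  have e37 : completeQuotient x 37 = surd 321482887408013 236878065945286 := h36.2
  have h37 := cq_step x 37 321482887408013 236878065945286 3 389151310427845 5525842 e37 (by norm_num) (by norm_num) (by norm_num) (by norm_num [N]) (by norm_num [s]) (by norm_num [s])
  have f37 : ⌊completeQuotient x 37⌋ = 3 := h37.1
  have e38 : completeQuotient x 38 = surd 389151310427845 5525842 := h37.2
  have h38 := cq_step x 38 389151310427845 5525842 140847787 389151306583809 778302029693618 e38 (by norm_num) (by norm_num) (by norm_num) (by norm_num [N]) (by norm_num [s]) (by norm_num [s])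
  have f38 : ⌊completeQuotient x 38⌋ = 140847787 := h38.1
  have e39 : completeQuotient x 39 = surd 389151306583809 778302029693618 := h38.2
  have h39 := cq_step x 39 389151306583809 778302029693618 1 389150723109809 588999842 e39 (by norm_num) (by norm_num) (by norm_num) (by norm_num [N]) (by norm_num [s]) (by norm_num [s])
  have f39 : ⌊completeQuotient x 39⌋ = 1 := h39.1
  have e40 : completeQuotient x 40 = surd 389150723109809 588999842 := h39.2
  have h40 := cq_step x 40 389150723109809 588999842 1321396 389151312109623 31473274 e40 (by norm_num) (by norm_num) (by norm_num) (by norm_num [N]) (by norm_num [s]) (by norm_num [s])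
  have f40 : ⌊completeQuotient x 40⌋ = 1321396 := h40.1
  have e41 : completeQuotient x 41 = surd 389151312109623 31473274 := h40.2
  have h41 := cq_step x 41 389151312109623 31473274 24729000 389151280636377 778302489333842 e41 (by norm_num) (by norm_num) (by norm_num) (by norm_num [N]) (by norm_num [s]) (by norm_num [s])
  have f41 : ⌊completeQuotient x 41⌋ = 24729000 := h41.1
  have e42 : completeQuotient x 42 = surd 389151280636377 778302489333842 := h41.2
  have h42 := cq_step x 42 389151280636377 778302489333842 1 389151208697465 103412186 e42 (by norm_num) (by norm_num) (by norm_num) (by norm_num [N]) (by norm_num [s]) (by norm_num [s])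
  have f42 : ⌊completeQuotient x 42⌋ = 1 := h42.1
  have e43 : completeQuotient x 43 = surd 389151208697465 103412186 := h42.2
  have h43 := cq_step x 43 389151208697465 103412186 7526216 389151240170711 541428041716706 e43 (by norm_num) (by norm_num) (by norm_num) (by norm_num [N]) (by norm_num [s]) (by norm_num [s])
  have f43 : ⌊completeQuotient x 43⌋ = 7526216 := h43.1
  have e44 : completeQuotient x 44 = surd 389151240170711 541428041716706 := h43.2
  have h44 := cq_step x 44 389151240170711 541428041716706 1 152276801545995 236874542036902 e44 (by norm_num) (by norm_num) (by norm_num) (by norm_num [N]) (by norm_num [s]) (by norm_num [s])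
  have f44 : ⌊completeQuotient x 44⌋ = 1 := h44.1
  have e45 : completeQuotient x 45 = surd 152276801545995 236874542036902 := h44.2
  have h45 := cq_step x 45 152276801545995 236874542036902 2 321472282527809 203037079753078 e45 (by norm_num) (by norm_num) (by norm_num) (by norm_num [N]) (by norm_num [s]) (by norm_num [s])
  have f45 : ⌊completeQuotient x 45⌋ = 2 := h45.1
  have e46 : completeQuotient x 46 = surd 321472282527809 203037079753078 := h45.2
  have h46 := cq_step x 46 321472282527809 203037079753078 3 287638956731425 338374519426054 e46 (by norm_num) (by norm_num) (by norm_num) (by norm_num [N]) (by norm_num [s]) (by norm_num [s])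
  have f46 : ⌊completeQuotient x 46⌋ = 3 := h46.1
  have e47 : completeQuotient x 47 = surd 287638956731425 338374519426054 := h46.2
  have h47 := cq_step x 47 287638956731425 338374519426054 2 389110082120683 94828974562 e47 (by norm_num) (by norm_num) (by norm_num) (by norm_num [N]) (by norm_num [s]) (by norm_num [s])
  have f47 : ⌊completeQuotient x 47⌋ = 2 := h47.1
  have e48 : completeQuotient x 48 = surd 389110082120683 94828974562 := h47.2
  have h48 := cq_step x 48 389110082120683 94828974562 8206 389056483135089 778207795210418 e48 (by norm_num) (by norm_num) (by norm_num) (by norm_num [N]) (by norm_num [s]) (by norm_num [s])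
  have f48 : ⌊completeQuotient x 48⌋ = 8206 := h48.1
  have e49 : completeQuotient x 49 = surd 389056483135089 778207795210418 := h48.2
  have h49 := cq_step x 49 389056483135089 778207795210418 1 389151312075329 34322 e49 (by norm_num) (by norm_num) (by norm_num) (by norm_num [N]) (by norm_num [s]) (by norm_num [s])
  have f49 : ⌊completeQuotient x 49⌋ = 1 := h49.1
  have e50 : completeQuotient x 50 = surd 389151312075329 34322 := h49.2
  have h50 := cq_step x 50 389151312075329 34322 22676493916 389151312109623 540112855114 e50 (by norm_num) (by norm_num) (by norm_num) (by norm_num [N]) (by norm_num [s]) (by norm_num [s])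
  have f50 : ⌊completeQuotient x 50⌋ = 22676493916 := h50.1
  have e51 : completeQuotient x 51 = surd 389151312109623 540112855114 := h50.2
  have h51 := cq_step x 51 389151312109623 540112855114 1440 388611199254537 777762511358162 e51 (by norm_num) (by norm_num) (by norm_num) (by norm_num [N]) (by norm_num [s]) (by norm_num [s])
  have f51 : ⌊completeQuotient x 51⌋ = 1440 := h51.1
  have e52 : completeQuotient x 52 = surd 388611199254537 777762511358162 := h51.2
  have h52 := cq_step x 52 388611199254537 777762511358162 1 389151312103625 6026 e52 (by norm_num) (by norm_num) (by norm_num) (by norm_num [N]) (by norm_num [s]) (by norm_num [s])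
  have f52 : ⌊completeQuotient x 52⌋ = 1 := h52.1
  have e53 : completeQuotient x 53 = surd 389151312103625 6026 := h52.2
  have h53 := cq_step x 53 389151312103625 6026 129157421874 389151312109099 70754784019886 e53 (by norm_num) (by norm_num) (by norm_num) (by norm_num [N]) (by norm_num [s]) (by norm_num [s])
  have f53 : ⌊completeQuotient x 53⌋ = 129157421874 := h53.1
  have e54 : completeQuotient x 54 = surd 389151312109099 70754784019886 := h53.2
  have h54 := cq_step x 54 389151312109099 70754784019886 10 318396528089761 707547840199406 e54 (by norm_num) (by norm_num) (by norm_num) (by norm_num [N]) (by norm_num [s]) (by norm_num [s])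
  have f54 : ⌊completeQuotient x 54⌋ = 10 := h54.1
  have e55 : completeQuotient x 55 = surd 318396528089761 707547840199406 := h54.2
  have h55 := cq_step x 55 318396528089761 707547840199406 1 389151312109645 2 e55 (by norm_num) (by norm_num) (by norm_num) (by norm_num [N]) (by norm_num [s]) (by norm_num [s])
  have f55 : ⌊completeQuotient x 55⌋ = 1 := h55.1
  have e56 : completeQuotient x 56 = surd 389151312109645 2 := h55.2
  have h56 := cq_step x 56 389151312109645 2 389151312109645 389151312109645 707547840199406 e56 (by norm_num) (by norm_num) (by norm_num) (by norm_num [N]) (by norm_num [s]) (by norm_num [s])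
  have f56 : ⌊completeQuotient x 56⌋ = 389151312109645 := h56.1
  have e57 : completeQuotient x 57 = surd 389151312109645 707547840199406 := h56.2
  have hper : completeQuotient x 57 = completeQuotient x 1 := by rw [e57, e1]
  have hshift := cq_shift x hper
  have part3 : ∀ k, 1 ≤ k → a (k + 56) = a k := by
    intro k hk
    obtain ⟨j, rfl⟩ := Nat.exists_eq_add_of_le hk
    rw [ha, ha, show 1 + j + 56 = 57 + j by omega, hshift j]
  refine ⟨by norm_num [N], ?_, part3, ?_⟩
  · rintro ⟨r, hr⟩
    have h0 : (0:ℤ) ≤ |r| := abs_nonneg r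
    have hrr : |r| * |r| = N := by rw [abs_mul_abs_self]; exact hr.symm
    rcases le_or_gt |r| 389151312109646 with h | h
    · have hm := mul_le_mul h h h0 (by norm_num)
      rw [hrr] at hm
      norm_num [N] at hm
    · have h' : (389151312109647:ℤ) ≤ |r| := h
      have hm := mul_le_mul h' h' (by norm_num) h0
      rw [hrr] at hm
      norm_num [N] at hm
  · intro p hp hper'
    by_contra hlt
    push_neg at hlt
    interval_cases p
    · have h := hper' 1 (by norm_num)
      norm_num at h
      rw [ha, ha, f2, f1] at h
      norm_num at h
    · have h := hper' 1 (by norm_num)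
      norm_num at h
      rw [ha, ha, f3, f1] at h
      norm_num at h
    · have h := hper' 2 (by norm_num)
      norm_num at h
      rw [ha, ha, f5, f2] at h
      norm_num at h
    · have h := hper' 1 (by norm_num)
      norm_num at h
      rw [ha, ha, f5, f1] at h
      norm_num at h
    · have h := hper' 1 (by norm_num)
      norm_num at h
      rw [ha, ha, f6, f1] at h
      norm_num at h
    · have h := hper' 2 (by norm_num)
      norm_num at h
      rw [ha, ha, f8, f2] at h
      norm_num at h
    · have h := hper' 1 (by norm_num)
      norm_num at h
      rw [ha, ha, f8, f1] at h
      norm_num at h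
    · have h := hper' 1 (by norm_num)
      norm_num at h
      rw [ha, ha, f9, f1] at h
      norm_num at h
    · have h := hper' 1 (by norm_num)
      norm_num at h
      rw [ha, ha, f10, f1] at h
      norm_num at h
    · have h := hper' 1 (by norm_num)
      norm_num at h
      rw [ha, ha, f11, f1] at h
      norm_num at h
    · have h := hper' 2 (by norm_num)
      norm_num at h
      rw [ha, ha, f13, f2] at h
      norm_num at h
    · have h := hper' 1 (by norm_num)
      norm_num at h
      rw [ha, ha, f13, f1] at h
      norm_num at h
    · have h := hper' 2 (by norm_num)
      norm_num at h
      rw [ha, ha, f15, f2] at h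
      norm_num at h
    · have h := hper' 1 (by norm_num)
      norm_num at h
      rw [ha, ha, f15, f1] at h
      norm_num at h
    · have h := hper' 1 (by norm_num)
      norm_num at h
      rw [ha, ha, f16, f1] at h
      norm_num at h
    · have h := hper' 2 (by norm_num)
      norm_num at h
      rw [ha, ha, f18, f2] at h
      norm_num at h
    · have h := hper' 1 (by norm_num)
      norm_num at h
      rw [ha, ha, f18, f1] at h
      norm_num at h
    · have h := hper' 1 (by norm_num)
      norm_num at h
      rw [ha, ha, f19, f1] at h
      norm_num at h
    · have h := hper' 1 (by norm_num)
      norm_num at h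
      rw [ha, ha, f20, f1] at h
      norm_num at h
    · have h := hper' 2 (by norm_num)
      norm_num at h
      rw [ha, ha, f22, f2] at h
      norm_num at h
    · have h := hper' 2 (by norm_num)
      norm_num at h
      rw [ha, ha, f23, f2] at h
      norm_num at h
    · have h := hper' 1 (by norm_num)
      norm_num at h
      rw [ha, ha, f23, f1] at h
      norm_num at h
    · have h := hper' 2 (by norm_num)
      norm_num at h
      rw [ha, ha, f25, f2] at h
      norm_num at h
    · have h := hper' 1 (by norm_num)
      norm_num at h
      rw [ha, ha, f25, f1] at h
      norm_num at h
    · have h := hper' 1 (by norm_num)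
      norm_num at h
      rw [ha, ha, f26, f1] at h
      norm_num at h
    · have h := hper' 2 (by norm_num)
      norm_num at h
      rw [ha, ha, f28, f2] at h
      norm_num at h
    · have h := hper' 1 (by norm_num)
      norm_num at h
      rw [ha, ha, f28, f1] at h
      norm_num at h
    · have h := hper' 2 (by norm_num)
      norm_num at h
      rw [ha, ha, f30, f2] at h
      norm_num at h
    · have h := hper' 1 (by norm_num)
      norm_num at h
      rw [ha, ha, f30, f1] at h
      norm_num at h
    · have h := hper' 1 (by norm_num)
      norm_num at h
      rw [ha, ha, f31, f1] at h
      norm_num at h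
    · have h := hper' 2 (by norm_num)
      norm_num at h
      rw [ha, ha, f33, f2] at h
      norm_num at h
    · have h := hper' 1 (by norm_num)
      norm_num at h
      rw [ha, ha, f33, f1] at h
      norm_num at h
    · have h := hper' 2 (by norm_num)
      norm_num at h
      rw [ha, ha, f35, f2] at h
      norm_num at h
    · have h := hper' 2 (by norm_num)
      norm_num at h
      rw [ha, ha, f36, f2] at h
      norm_num at h
    · have h := hper' 1 (by norm_num)
      norm_num at h
      rw [ha, ha, f36, f1] at h
      norm_num at h
    · have h := hper' 1 (by norm_num)
      norm_num at h
      rw [ha, ha, f37, f1] at h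
      norm_num at h
    · have h := hper' 1 (by norm_num)
      norm_num at h
      rw [ha, ha, f38, f1] at h
      norm_num at h
    · have h := hper' 2 (by norm_num)
      norm_num at h
      rw [ha, ha, f40, f2] at h
      norm_num at h
    · have h := hper' 1 (by norm_num)
      norm_num at h
      rw [ha, ha, f40, f1] at h
      norm_num at h
    · have h := hper' 1 (by norm_num)
      norm_num at h
      rw [ha, ha, f41, f1] at h
      norm_num at h
    · have h := hper' 2 (by norm_num)
      norm_num at h
      rw [ha, ha, f43, f2] at h
      norm_num at h
    · have h := hper' 1 (by norm_num)
      norm_num at h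
      rw [ha, ha, f43, f1] at h
      norm_num at h
    · have h := hper' 2 (by norm_num)
      norm_num at h
      rw [ha, ha, f45, f2] at h
      norm_num at h
    · have h := hper' 1 (by norm_num)
      norm_num at h
      rw [ha, ha, f45, f1] at h
      norm_num at h
    · have h := hper' 1 (by norm_num)
      norm_num at h
      rw [ha, ha, f46, f1] at h
      norm_num at h
    · have h := hper' 1 (by norm_num)
      norm_num at h
      rw [ha, ha, f47, f1] at h
      norm_num at h
    · have h := hper' 1 (by norm_num)
      norm_num at h
      rw [ha, ha, f48, f1] at h
      norm_num at h
    · have h := hper' 2 (by norm_num)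
      norm_num at h
      rw [ha, ha, f50, f2] at h
      norm_num at h
    · have h := hper' 1 (by norm_num)
      norm_num at h
      rw [ha, ha, f50, f1] at h
      norm_num at h
    · have h := hper' 1 (by norm_num)
      norm_num at h
      rw [ha, ha, f51, f1] at h
      norm_num at h
    · have h := hper' 2 (by norm_num)
      norm_num at h
      rw [ha, ha, f53, f2] at h
      norm_num at h
    · have h := hper' 1 (by norm_num)
      norm_num at h
      rw [ha, ha, f53, f1] at h
      norm_num at h
    · have h := hper' 1 (by norm_num)
      norm_num at h
      rw [ha, ha, f54, f1] at h
      norm_num at h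
    · have h := hper' 2 (by norm_num)
      norm_num at h
      rw [ha, ha, f56, f2] at h
      norm_num at h
    · have h := hper' 1 (by norm_num)
      norm_num at h
      rw [ha, ha, f56, f1] at h
      norm_num at h
end
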